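/- arXiv:1203.0227 — 11 statements merged into one kernel-verified Lean document; each statement's English description precedes it below -/
import Mathlib

section
/- Let X be a real or complex Banach space and let k be a fixed positive integer. Let f_n : X^{k+1} → X (n = 0,1,2,…) be a sequence of functions for which there exists a real number α ∈ (0,1) such that ‖f_n(ξ_0, ξ_1, …, ξ_k)‖ ≤ α·max{‖ξ_0‖, …, ‖ξ_k‖} for every n and all (ξ_0, …, ξ_k) ∈ X^{k+1}. Then every solution (x_n)_{n ≥ −k} of the difference equation x_{n+1} = f_n(x_n, x_{n−1}, …, x_{n−k}) with initial values x_0, x_{−1}, …, x_{−k} ∈ X satisfies ‖x_n‖ ≤ α^{n/(k+1)} · max{‖x_0‖, ‖x_{−1}‖, …, ‖x_{−k}‖} for all n ≥ 1. In particular, the origin is globally exponentially stable. -/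
/-- **Lemma 1 (gas0).** Let `X` be a real or complex Banach space and `k` a positive
integer. If the functions `fₙ : X^{k+1} → X` satisfy
`‖fₙ(ξ₀,…,ξ_k)‖ ≤ α · max{‖ξ₀‖,…,‖ξ_k‖}` for some `α ∈ (0,1)`, then every solution
`(xₙ)_{n ≥ -k}` of `x_{n+1} = fₙ(xₙ, x_{n-1}, …, x_{n-k})` satisfies
`‖xₙ‖ ≤ α^{n/(k+1)} · max{‖x₀‖, ‖x_{-1}‖, …, ‖x_{-k}‖}` for all `n ≥ 1`
(hence the origin is globally exponentially stable). -/
theorem global_exponential_stability_of_norm_contraction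
    {𝕜 : Type*} [RCLike 𝕜] {X : Type*} [NormedAddCommGroup X]
    [NormedSpace 𝕜 X] [CompleteSpace X]
    (k : ℕ) (hk : 0 < k)
    (f : ℕ → (Fin (k + 1) → X) → X) (α : ℝ) (hα : α ∈ Set.Ioo (0 : ℝ) 1)
    (hf : ∀ (n : ℕ) (ξ : Fin (k + 1) → X),
      ‖f n ξ‖ ≤ α * (Finset.univ.sup' Finset.univ_nonempty fun i => ‖ξ i‖))
    (x : ℤ → X)
    (hx : ∀ n : ℤ, 0 ≤ n → x (n + 1) = f n.toNat fun i : Fin (k + 1) => x (n - (i : ℤ))) :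
    ∀ n : ℤ, 1 ≤ n →
      ‖x n‖ ≤ α ^ ((n : ℝ) / ((k : ℝ) + 1)) *
        (Finset.univ.sup' Finset.univ_nonempty fun i : Fin (k + 1) => ‖x (-(i : ℤ))‖) := by
  obtain ⟨hα0, hα1⟩ := hα
  set M := (Finset.univ.sup' Finset.univ_nonempty fun i : Fin (k + 1) => ‖x (-(i : ℤ))‖)
    with hMdef
  have hM0 : 0 ≤ M :=
    le_trans (norm_nonneg _) (Finset.le_sup' (fun i : Fin (k + 1) => ‖x (-(i : ℤ))‖)
      (Finset.mem_univ (0 : Fin (k + 1))))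
  -- key bound with natural-number exponent (nat division)
  have key : ∀ m : ℕ, ‖x ((m : ℤ) - k)‖ ≤ α ^ (m / (k + 1)) * M := by
    intro m
    induction m using Nat.strong_induction_on with
    | _ m ih =>
      by_cases hm : m ≤ k
      · -- initial values
        have hdiv : m / (k + 1) = 0 := Nat.div_eq_of_lt (by omega)
        rw [hdiv, pow_zero, one_mul]
        have hi : k - m < k + 1 := by omega
        have : ((m : ℤ) - k) = -(((⟨k - m, hi⟩ : Fin (k + 1)) : ℤ)) := by
          simp only [Fin.val_mk]
          push_cast [Nat.cast_sub hm]
          ring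
        rw [this]
        exact Finset.le_sup' (fun i : Fin (k + 1) => ‖x (-(i : ℤ))‖) (Finset.mem_univ _)
      · -- recursion step
        push_neg at hm
        have hm' : k + 1 ≤ m := hm
        set n : ℤ := (m : ℤ) - k with hn
        have hrec := hx (n - 1) (by omega)
        have hne : n - 1 + 1 = n := by ring
        rw [hne] at hrec
        have hq : m / (k + 1) = (m - (k + 1)) / (k + 1) + 1 := by
          rw [Nat.div_eq_sub_div (by omega) hm']
        -- bound the sup over previous values
        have hsup : (Finset.univ.sup' Finset.univ_nonempty
            fun i : Fin (k + 1) => ‖x (n - 1 - (i : ℤ))‖) ≤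
            α ^ ((m - (k + 1)) / (k + 1)) * M := by
          apply Finset.sup'_le
          intro i _
          have hi : (i : ℕ) ≤ k := by omega
          have hcast : n - 1 - (i : ℤ) = ((m - 1 - (i : ℕ) : ℕ) : ℤ) - k := by
            have : (((m - 1 - (i : ℕ) : ℕ)) : ℤ) = (m : ℤ) - 1 - (i : ℕ) := by
              push_cast [Nat.cast_sub (by omega : (i:ℕ) ≤ m - 1),
                Nat.cast_sub (by omega : 1 ≤ m)]
              ring
            rw [this, hn]; ring
          rw [hcast]
          refine le_trans (ih (m - 1 - (i : ℕ)) (by omega)) ?_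
          apply mul_le_mul_of_nonneg_right _ hM0
          apply pow_le_pow_of_le_one hα0.le hα1.le
          exact Nat.div_le_div_right (by omega)
        calc ‖x n‖ = ‖f (n - 1).toNat fun i : Fin (k + 1) => x (n - 1 - (i : ℤ))‖ := by
              rw [hrec]
          _ ≤ α * (Finset.univ.sup' Finset.univ_nonempty
                fun i : Fin (k + 1) => ‖x (n - 1 - (i : ℤ))‖) := hf _ _
          _ ≤ α * (α ^ ((m - (k + 1)) / (k + 1)) * M) :=
              mul_le_mul_of_nonneg_left hsup hα0.le
          _ = α ^ (m / (k + 1)) * M := by rw [hq, pow_succ]; ring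
  -- conclude with real exponent
  intro n hn
  have hm : ((n + k).toNat : ℤ) = n + k := Int.toNat_of_nonneg (by omega)
  set m : ℕ := (n + k).toNat with hmdef
  have hxn : ‖x n‖ ≤ α ^ (m / (k + 1)) * M := by
    have := key m
    rw [hm] at this
    simpa using this
  refine le_trans hxn (mul_le_mul_of_nonneg_right ?_ hM0)
  rw [← Real.rpow_natCast α (m / (k + 1))]
  apply Real.rpow_le_rpow_of_exponent_ge hα0 hα1.le
  rw [div_le_iff₀ (by positivity)]
  have h1 : (k + 1) * (m / (k + 1)) + k ≥ m := by
    have := Nat.div_add_mod m (k + 1)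
    have := Nat.mod_lt m (y := k + 1) (by omega)
    omega
  have h2 : (m : ℝ) = (n : ℝ) + k := by exact_mod_cast congrArg (Int.cast : ℤ → ℝ) hm
  have h3 : ((k : ℝ) + 1) * ((m / (k + 1) : ℕ) : ℝ) + k ≥ (m : ℝ) := by exact_mod_cast h1
  linarith
end

section
/- Let X be an algebra with identity over a field (not necessarily normed), let k be a fixed positive integer, let a_0, …, a_k, b_0, …, b_k ∈ X, and let g_n : X → X (n = 0,1,2,…) be a sequence of functions. Suppose ρ is an invertible element of X that is a common root of the polynomials P(ξ) = ξ^{k+1} − Σ_{i=0}^{k} a_i ξ^{k−i} and Q(ξ) = Σ_{i=0}^{k} b_i ξ^{k−i}, i.e., P(ρ) = 0 and Q(ρ) = 0. For i = 0, 1, …, k−1 define p_i = ρ^{i+1} − a_0 ρ^i − a_1 ρ^{i−1} − ⋯ − a_i and q_i = b_0 ρ^i + b_1 ρ^{i−1} + ⋯ + b_i. If (x_n)_{n ≥ −k} is a solution of x_{n+1} = Σ_{i=0}^{k} a_i x_{n−i} + g_n(Σ_{i=0}^{k} b_i x_{n−i}) and we set t_n = x_n − ρ x_{n−1} for n ≥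 −k+1, then for all n ≥ 0: t_{n+1} = −Σ_{i=0}^{k−1} p_i t_{n−i} + g_n(Σ_{i=0}^{k−1} q_i t_{n−i}), and x_{n+1} = ρ x_n + t_{n+1}. -/
/-- **Lemma 3 (fsor), forward direction.** Reduction of order on an algebra `X` with
identity over a field. If `ρ` is an invertible common root of
`P(ξ) = ξ^{k+1} − ∑ᵢ aᵢ ξ^{k−i}` and `Q(ξ) = ∑ᵢ bᵢ ξ^{k−i}`, and `(xₙ)` solves
`x_{n+1} = ∑ᵢ aᵢ x_{n−i} + gₙ(∑ᵢ bᵢ x_{n−i})`, then `tₙ = xₙ − ρ x_{n−1}` solves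
the factor equation `t_{n+1} = −∑_{i<k} pᵢ t_{n−i} + gₙ(∑_{i<k} qᵢ t_{n−i})`, where
`pᵢ = ρ^{i+1} − a₀ρ^i − ⋯ − aᵢ` and `qᵢ = b₀ρ^i + ⋯ + bᵢ`, and moreover
`x_{n+1} = ρ xₙ + t_{n+1}`. -/
theorem reduction_of_order_forward
    {F X : Type*} [Field F] [Ring X] [Algebra F X]
    (k : ℕ) (hk : 0 < k)
    (g : ℕ → X → X) (a b : ℕ → X) (ρ : X) (hρ : IsUnit ρ)
    (hP : ρ ^ (k + 1) - ∑ i ∈ Finset.range (k + 1), a i * ρ ^ (k - i) = 0)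
    (hQ : ∑ i ∈ Finset.range (k + 1), b i * ρ ^ (k - i) = 0)
    (x : ℤ → X)
    (hx : ∀ n : ℤ, 0 ≤ n → x (n + 1) =
      ∑ i ∈ Finset.range (k + 1), a i * x (n - (i : ℤ)) +
        g n.toNat (∑ i ∈ Finset.range (k + 1), b i * x (n - (i : ℤ))))
    (t : ℤ → X)
    (ht : ∀ n : ℤ, -(k : ℤ) + 1 ≤ n → t n = x n - ρ * x (n - 1)) :
    ∀ n : ℤ, 0 ≤ n →
      (t (n + 1) =
        -∑ i ∈ Finset.range k,
            (ρ ^ (i + 1) - ∑ j ∈ Finset.range (i + 1), a j * ρ ^ (i - j)) * t (n - (i : ℤ)) +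
          g n.toNat (∑ i ∈ Finset.range k,
            (∑ j ∈ Finset.range (i + 1), b j * ρ ^ (i - j)) * t (n - (i : ℤ)))) ∧
      x (n + 1) = ρ * x n + t (n + 1) := by
  intro n hn
  have hkZ : (1:ℤ) ≤ (k:ℤ) := by exact_mod_cast hk
  set Qf : ℕ → X := fun i => ∑ j ∈ Finset.range (i + 1), b j * ρ ^ (i - j) with hQf
  set Pf : ℕ → X := fun i => ρ ^ (i + 1) - ∑ j ∈ Finset.range (i + 1), a j * ρ ^ (i - j) with hPf
  have hQstep : ∀ i : ℕ, Qf i * ρ = Qf (i + 1) - b (i + 1) := by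
    intro i
    have h1 : Qf i * ρ = ∑ j ∈ Finset.range (i + 1), b j * ρ ^ (i + 1 - j) := by
      rw [hQf, Finset.sum_mul]
      refine Finset.sum_congr rfl fun j hj => ?_
      have hji : j ≤ i := Nat.lt_succ_iff.mp (Finset.mem_range.mp hj)
      rw [mul_assoc, ← pow_succ]
      congr 2
      omega
    rw [h1, hQf]
    simp [Finset.sum_range_succ]
  have hPstep : ∀ i : ℕ, Pf i * ρ = Pf (i + 1) + a (i + 1) := by
    intro i
    have h1 : (∑ j ∈ Finset.range (i + 1), a j * ρ ^ (i - j)) * ρ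
        = ∑ j ∈ Finset.range (i + 1), a j * ρ ^ (i + 1 - j) := by
      rw [Finset.sum_mul]
      refine Finset.sum_congr rfl fun j hj => ?_
      have hji : j ≤ i := Nat.lt_succ_iff.mp (Finset.mem_range.mp hj)
      rw [mul_assoc, ← pow_succ]
      congr 2
      omega
    rw [hPf]
    simp only [sub_mul, h1, ← pow_succ]
    rw [Finset.sum_range_succ (fun j => a j * ρ ^ (i + 1 - j)) (i + 1)]
    simp only [Nat.sub_self, pow_zero, mul_one]
    abel
  have hQk : Qf k = 0 := hQ
  have hPk : Pf k = 0 := hP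
  have ht1 : t (n + 1) = x (n + 1) - ρ * x n := by
    have := ht (n + 1) (by linarith)
    simpa using this
  have hti : ∀ i ∈ Finset.range k, t (n - (i : ℤ)) = x (n - (i : ℤ)) - ρ * x (n - ((i : ℤ) + 1)) := by
    intro i hi
    have hik : (i : ℤ) ≤ (k : ℤ) - 1 := by
      have := Finset.mem_range.mp hi; omega
    have := ht (n - (i : ℤ)) (by linarith)
    rw [this, sub_sub]
  -- q-sum
  have qsum : ∑ i ∈ Finset.range k, Qf i * t (n - (i : ℤ))
      = ∑ i ∈ Finset.range (k + 1), b i * x (n - (i : ℤ)) := by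
    have step : ∑ i ∈ Finset.range k, Qf i * t (n - (i : ℤ))
        = ∑ i ∈ Finset.range k,
            ((Qf i * x (n - (i : ℤ)) - Qf (i + 1) * x (n - ((i + 1 : ℕ) : ℤ)))
              + b (i + 1) * x (n - ((i + 1 : ℕ) : ℤ))) := by
      refine Finset.sum_congr rfl fun i hi => ?_
      rw [hti i hi, mul_sub, ← mul_assoc, hQstep i, sub_mul]
      push_cast
      abel
    rw [step, Finset.sum_add_distrib,
      Finset.sum_range_sub' (fun i => Qf i * x (n - (i : ℤ))) k]
    rw [Finset.sum_range_succ' (fun i => b i * x (n - (i : ℤ))) k, hQk]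
    simp only [hQf, zero_mul, zero_add, Finset.sum_range_one, Nat.sub_self, pow_zero, mul_one,
      Nat.cast_zero, sub_zero]
    abel
  -- p-sum
  have psum : ∑ i ∈ Finset.range k, Pf i * t (n - (i : ℤ))
      = ρ * x n - ∑ i ∈ Finset.range (k + 1), a i * x (n - (i : ℤ)) := by
    have step : ∑ i ∈ Finset.range k, Pf i * t (n - (i : ℤ))
        = ∑ i ∈ Finset.range k,
            ((Pf i * x (n - (i : ℤ)) - Pf (i + 1) * x (n - ((i + 1 : ℕ) : ℤ)))
              - a (i + 1) * x (n - ((i + 1 : ℕ) : ℤ))) := by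
      refine Finset.sum_congr rfl fun i hi => ?_
      rw [hti i hi, mul_sub, ← mul_assoc, hPstep i, add_mul]
      push_cast
      abel
    rw [step, Finset.sum_sub_distrib,
      Finset.sum_range_sub' (fun i => Pf i * x (n - (i : ℤ))) k]
    rw [Finset.sum_range_succ' (fun i => a i * x (n - (i : ℤ))) k, hPk]
    simp only [hPf, zero_mul, zero_add, Finset.sum_range_one, Nat.sub_self, pow_zero, mul_one,
      Nat.cast_zero, sub_zero, pow_one, sub_mul]
    abel
  refine ⟨?_, by rw [ht1]; abel⟩
  calc t (n + 1) = x (n + 1) - ρ * x n := ht1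
    _ = -(ρ * x n - ∑ i ∈ Finset.range (k + 1), a i * x (n - (i : ℤ)))
        + g n.toNat (∑ i ∈ Finset.range (k + 1), b i * x (n - (i : ℤ))) := by
        rw [hx n hn]; abel
    _ = _ := by rw [← psum, ← qsum]
end

section
/- Let X be an algebra with identity over a field (not necessarily normed), let k be a fixed positive integer, let a_0, …, a_k, b_0, …, b_k ∈ X, and let g_n : X → X (n = 0,1,2,…) be a sequence of functions. Suppose ρ is an invertible element of X that is a common root of the polynomials P(ξ) = ξ^{k+1} − Σ_{i=0}^{k} a_i ξ^{k−i} and Q(ξ) = Σ_{i=0}^{k} b_i ξ^{k−i}. For i = 0, 1, …, k−1 define p_i = ρ^{i+1} − a_0 ρ^i − ⋯ − a_i and q_i = b_0 ρ^i + ⋯ + b_i. If (t_n)_{n ≥ −k+1} is a solution of the factor equation t_{n+1} = −Σ_{i=0}^{k−1} p_i t_{n−i} + g_n(Σ_{i=0}^{k−1} q_i t_{n−i}) with initial values t_0, t_{−1}, …, t_{−k+1} ∈ X, and (x_n)_{n ≥ −k} is the sequence generated from an arbitrary element x_{−k} ∈ X by the cofactor equation x_n = ρ x_{n−1} + t_n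 for n ≥ −k+1, then (x_n) is a solution of the original equation, i.e., x_{n+1} = Σ_{i=0}^{k} a_i x_{n−i} + g_n(Σ_{i=0}^{k} b_i x_{n−i}) for all n ≥ 0. -/
private lemma tele {X : Type*} [Ring X] (ρ : X) (c d : ℕ → X) (y : ℤ → X) (n : ℤ) :
    ∀ m : ℕ, (∀ i < m, c i * ρ = c (i + 1) + d (i + 1)) →
    ∑ i ∈ Finset.range m, c i * (y (n - (i : ℤ)) - ρ * y (n - (i : ℤ) - 1)) =
      c 0 * y n - c m * y (n - (m : ℤ)) -
        ∑ i ∈ Finset.range m, d (i + 1) * y (n - (i : ℤ) - 1) := by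
  intro m
  induction m with
  | zero => simp
  | succ m ih =>
    intro h
    rw [Finset.sum_range_succ, Finset.sum_range_succ, ih (fun i hi => h i (by omega))]
    have h1 : c m * ρ = c (m + 1) + d (m + 1) := h m (by omega)
    have h2 : n - ((m : ℕ) + 1 : ℤ) = n - (m : ℤ) - 1 := by ring
    push_cast
    rw [h2, mul_sub, ← mul_assoc, h1, add_mul]
    abel

private lemma powstep {X : Type*} [Ring X] (ρ u : X) {i j : ℕ} (hj : j < i + 1) :
    u * ρ ^ (i - j) * ρ = u * ρ ^ (i + 1 - j) := by
  have h : i + 1 - j = (i - j) + 1 := by omega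
  rw [mul_assoc, ← pow_succ, h]

private lemma crel {X : Type*} [Ring X] (ρ : X) (a : ℕ → X) (i : ℕ) :
    (ρ ^ (i + 1) - ∑ j ∈ Finset.range (i + 1), a j * ρ ^ (i - j)) * ρ =
      (ρ ^ (i + 1 + 1) - ∑ j ∈ Finset.range (i + 1 + 1), a j * ρ ^ (i + 1 - j)) + a (i + 1) := by
  rw [sub_mul, Finset.sum_mul, ← pow_succ,
    Finset.sum_congr rfl (fun j hj => powstep ρ (a j) (Finset.mem_range.mp hj)),
    show ∑ j ∈ Finset.range (i + 1 + 1), a j * ρ ^ (i + 1 - j) =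
      (∑ j ∈ Finset.range (i + 1), a j * ρ ^ (i + 1 - j)) + a (i + 1) from by
        rw [Finset.sum_range_succ]; simp]
  abel

private lemma qrel {X : Type*} [Ring X] (ρ : X) (b : ℕ → X) (i : ℕ) :
    (∑ j ∈ Finset.range (i + 1), b j * ρ ^ (i - j)) * ρ =
      (∑ j ∈ Finset.range (i + 1 + 1), b j * ρ ^ (i + 1 - j)) + -(b (i + 1)) := by
  rw [Finset.sum_mul,
    Finset.sum_congr rfl (fun j hj => powstep ρ (b j) (Finset.mem_range.mp hj)),
    show ∑ j ∈ Finset.range (i + 1 + 1), b j * ρ ^ (i + 1 - j) =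
      (∑ j ∈ Finset.range (i + 1), b j * ρ ^ (i + 1 - j)) + b (i + 1) from by
        rw [Finset.sum_range_succ]; simp]
  abel


/-- **Lemma 3 (fsor), converse direction.** On an algebra `X` with identity over a
field, suppose `ρ` is an invertible common root of `P(ξ) = ξ^{k+1} − ∑ᵢ aᵢ ξ^{k−i}`
and `Q(ξ) = ∑ᵢ bᵢ ξ^{k−i}`. If `(tₙ)` solves the factor equation
`t_{n+1} = −∑_{i<k} pᵢ t_{n−i} + gₙ(∑_{i<k} qᵢ t_{n−i})` (with
`pᵢ = ρ^{i+1} − a₀ρ^i − ⋯ − aᵢ`, `qᵢ = b₀ρ^i + ⋯ + bᵢ`) and `(xₙ)` is generated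
from an arbitrary `x_{−k}` by the cofactor equation `xₙ = ρ x_{n−1} + tₙ` for
`n ≥ −k+1`, then `(xₙ)` solves `x_{n+1} = ∑ᵢ aᵢ x_{n−i} + gₙ(∑ᵢ bᵢ x_{n−i})`. -/
theorem reduction_of_order_converse
    {F X : Type*} [Field F] [Ring X] [Algebra F X]
    (k : ℕ) (hk : 0 < k)
    (g : ℕ → X → X) (a b : ℕ → X) (ρ : X) (hρ : IsUnit ρ)
    (hP : ρ ^ (k + 1) - ∑ i ∈ Finset.range (k + 1), a i * ρ ^ (k - i) = 0)
    (hQ : ∑ i ∈ Finset.range (k + 1), b i * ρ ^ (k - i) = 0)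
    (t : ℤ → X)
    (ht : ∀ n : ℤ, 0 ≤ n → t (n + 1) =
      -∑ i ∈ Finset.range k,
          (ρ ^ (i + 1) - ∑ j ∈ Finset.range (i + 1), a j * ρ ^ (i - j)) * t (n - (i : ℤ)) +
        g n.toNat (∑ i ∈ Finset.range k,
          (∑ j ∈ Finset.range (i + 1), b j * ρ ^ (i - j)) * t (n - (i : ℤ))))
    (x : ℤ → X)
    (hx : ∀ n : ℤ, -(k : ℤ) + 1 ≤ n → x n = ρ * x (n - 1) + t n) :
    ∀ n : ℤ, 0 ≤ n → x (n + 1) =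
      ∑ i ∈ Finset.range (k + 1), a i * x (n - (i : ℤ)) +
        g n.toNat (∑ i ∈ Finset.range (k + 1), b i * x (n - (i : ℤ))) := by
  intro n hn
  have hx1 : x (n + 1) = ρ * x n + t (n + 1) := by
    have := hx (n + 1) (by omega)
    simpa using this
  have hteq : ∀ i ∈ Finset.range k,
      t (n - (i : ℤ)) = x (n - (i : ℤ)) - ρ * x (n - (i : ℤ) - 1) := by
    intro i hi
    rw [Finset.mem_range] at hi
    have h := hx (n - (i : ℤ)) (by omega)
    rw [h]; abel
  -- the a-sum identity
  have hsa : ∑ i ∈ Finset.range (k + 1), a i * x (n - (i : ℤ)) =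
      ∑ i ∈ Finset.range k, a (i + 1) * x (n - (i : ℤ) - 1) + a 0 * x n := by
    rw [Finset.sum_range_succ']
    congr 1
    · refine Finset.sum_congr rfl fun i _ => ?_
      congr 2
      push_cast; ring
    · norm_num
  have hsb : ∑ i ∈ Finset.range (k + 1), b i * x (n - (i : ℤ)) =
      ∑ i ∈ Finset.range k, b (i + 1) * x (n - (i : ℤ) - 1) + b 0 * x n := by
    rw [Finset.sum_range_succ']
    congr 1
    · refine Finset.sum_congr rfl fun i _ => ?_
      congr 2
      push_cast; ring
    · norm_num
  have hA : ∑ i ∈ Finset.range k,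
      (ρ ^ (i + 1) - ∑ j ∈ Finset.range (i + 1), a j * ρ ^ (i - j)) * t (n - (i : ℤ)) =
      ρ * x n - ∑ i ∈ Finset.range (k + 1), a i * x (n - (i : ℤ)) := calc
    _ = ∑ i ∈ Finset.range k,
        (ρ ^ (i + 1) - ∑ j ∈ Finset.range (i + 1), a j * ρ ^ (i - j)) *
          (x (n - (i : ℤ)) - ρ * x (n - (i : ℤ) - 1)) :=
      Finset.sum_congr rfl fun i hi => by rw [hteq i hi]
    _ = (ρ ^ (0 + 1) - ∑ j ∈ Finset.range (0 + 1), a j * ρ ^ (0 - j)) * x n -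
        (ρ ^ (k + 1) - ∑ j ∈ Finset.range (k + 1), a j * ρ ^ (k - j)) * x (n - (k : ℤ)) -
        ∑ i ∈ Finset.range k, a (i + 1) * x (n - (i : ℤ) - 1) :=
      tele ρ (fun i => ρ ^ (i + 1) - ∑ j ∈ Finset.range (i + 1), a j * ρ ^ (i - j)) a x n k
        (fun i _ => crel ρ a i)
    _ = _ := by
      rw [hP, hsa]
      simp [sub_mul]
      abel
  have hB : ∑ i ∈ Finset.range k,
      (∑ j ∈ Finset.range (i + 1), b j * ρ ^ (i - j)) * t (n - (i : ℤ)) =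
      ∑ i ∈ Finset.range (k + 1), b i * x (n - (i : ℤ)) := calc
    _ = ∑ i ∈ Finset.range k,
        (∑ j ∈ Finset.range (i + 1), b j * ρ ^ (i - j)) *
          (x (n - (i : ℤ)) - ρ * x (n - (i : ℤ) - 1)) :=
      Finset.sum_congr rfl fun i hi => by rw [hteq i hi]
    _ = (∑ j ∈ Finset.range (0 + 1), b j * ρ ^ (0 - j)) * x n -
        (∑ j ∈ Finset.range (k + 1), b j * ρ ^ (k - j)) * x (n - (k : ℤ)) -
        ∑ i ∈ Finset.range k, -(b (i + 1)) * x (n - (i : ℤ) - 1) :=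
      tele ρ (fun i => ∑ j ∈ Finset.range (i + 1), b j * ρ ^ (i - j)) (fun i => -(b i)) x n k
        (fun i _ => qrel ρ b i)
    _ = _ := by
      rw [hQ, hsb]
      simp
      abel
  rw [hx1, ht n hn, hA, hB]
  abel
end

section
/- Let X be a real or complex Banach algebra with identity, let k be a fixed positive integer, let a_0, …, a_k, b_0, …, b_k ∈ X, and let g_n : X → X (n = 0,1,2,…) satisfy ‖g_n(ξ)‖ ≤ σ‖ξ‖ for all ξ ∈ X and all n, for some real σ > 0. Then every solution (x_n)_{n ≥ −k} of x_{n+1} = Σ_{i=0}^{k} a_i x_{n−i} + g_n(Σ_{i=0}^{k} b_i x_{n−i}) converges to zero if either (a) Σ_{i=0}^{k} (‖a_i‖ + σ‖b_i‖) < 1, or (b) the polynomials P(ξ) = ξ^{k+1} − Σ_{i=0}^{k} a_i ξ^{k−i} and Q(ξ) = Σ_{i=0}^{k} b_i ξ^{k−i} have a common root ρ that is an invertible element of X with ‖ρ‖ < 1 and Σ_{i=0}^{k−1} (‖p_i‖ + σ‖q_i‖) < 1, where p_i = ρ^{i+1} − a_0 ρ^i − ⋯ − a_i and q_i = b_0 ρ^i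 + ⋯ + b_i for i = 0, …, k−1. -/
open Filter Finset

lemma gas2_windowA (K : ℕ) (c : ℝ) (hc0 : 0 ≤ c) (hc1 : c < 1) (u : ℤ → ℝ)
    (hu0 : ∀ n, 0 ≤ u n)
    (hrec : ∀ n : ℤ, 0 ≤ n → ∀ B : ℝ, (∀ i : ℕ, i ≤ K → u (n - i) ≤ B) →
      u (n + 1) ≤ c * B) :
    Filter.Tendsto (fun n : ℕ => u n) Filter.atTop (nhds 0) := by
  set M : ℝ := ∑ i ∈ Finset.range (K + 1), u (-(i : ℤ)) with hM
  have hM0 : 0 ≤ M := Finset.sum_nonneg fun i _ => hu0 _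
  have hMle : ∀ i : ℕ, i ≤ K → u (-(i : ℤ)) ≤ M := fun i hi =>
    Finset.single_le_sum (f := fun i : ℕ => u (-(i : ℤ))) (fun j _ => hu0 _)
      (Finset.mem_range.mpr (Nat.lt_succ_of_le hi))
  have key : ∀ m : ℕ, u ((m : ℤ) - K) ≤ c ^ (m / (K + 1)) * M := by
    intro m
    induction m using Nat.strong_induction_on with
    | _ m ih =>
      rcases le_or_gt m K with hm | hm
      · have h1 : m / (K + 1) = 0 := Nat.div_eq_of_lt (Nat.lt_succ_of_le hm)
        rw [h1, pow_zero, one_mul]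
        have h2 : (m : ℤ) - K = -((K - m : ℕ) : ℤ) := by
          have : (K - m : ℕ) = K - m := rfl
          omega
        rw [h2]
        exact hMle _ (Nat.sub_le _ _)
      · set m' := m - (K + 1) with hm'
        have hmm : m = m' + (K + 1) := by omega
        have hB : ∀ i : ℕ, i ≤ K → u ((m' : ℤ) - i) ≤ c ^ (m' / (K + 1)) * M := by
          intro i hi
          have h3 : (m' : ℤ) - i = ((m' + K - i : ℕ) : ℤ) - K := by omega
          rw [h3]
          have h4 := ih (m' + K - i) (by omega)
          have h5 : m' / (K + 1) ≤ (m' + K - i) / (K + 1) :=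
            Nat.div_le_div_right (by omega)
          calc u (((m' + K - i : ℕ) : ℤ) - K) ≤ c ^ ((m' + K - i) / (K + 1)) * M := h4
            _ ≤ c ^ (m' / (K + 1)) * M :=
              mul_le_mul_of_nonneg_right (pow_le_pow_of_le_one hc0 hc1.le h5) hM0
        have h6 : (m : ℤ) - K = (m' : ℤ) + 1 := by omega
        rw [h6]
        have h7 := hrec (m' : ℤ) (by positivity) _ hB
        have h8 : m / (K + 1) = m' / (K + 1) + 1 := by
          rw [Nat.div_eq_sub_div (Nat.succ_pos K) (by omega)]
        rw [h8, pow_succ]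
        calc u ((m' : ℤ) + 1) ≤ c * (c ^ (m' / (K + 1)) * M) := h7
          _ = c ^ (m' / (K + 1)) * c * M := by ring
  have hb : ∀ n : ℕ, u n ≤ c ^ ((n + K) / (K + 1)) * M := by
    intro n
    have := key (n + K)
    have h : ((n + K : ℕ) : ℤ) - K = (n : ℤ) := by omega
    rwa [h] at this
  have h2 : Tendsto (fun n : ℕ => (n + K) / (K + 1)) atTop atTop := by
    apply tendsto_atTop_atTop.mpr
    intro b
    refine ⟨b * (K + 1), fun n hn => ?_⟩
    rw [Nat.le_div_iff_mul_le (by omega : 0 < K + 1)]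
    omega
  have h1 : Tendsto (fun j : ℕ => c ^ j * M) atTop (nhds 0) := by
    have := (tendsto_pow_atTop_nhds_zero_of_lt_one hc0 hc1).mul_const M
    rwa [zero_mul] at this
  exact squeeze_zero (fun n => hu0 _) hb (h1.comp h2)
open Filter

lemma gas2_lemB (r : ℝ) (hr0 : 0 ≤ r) (hr1 : r < 1) (v w : ℕ → ℝ)
    (hv0 : ∀ n, 0 ≤ v n)
    (hrec : ∀ n : ℕ, v (n + 1) ≤ r * v n + w (n + 1))
    (hw : Filter.Tendsto w Filter.atTop (nhds 0)) :
    Filter.Tendsto v Filter.atTop (nhds 0) := by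
  rw [Metric.tendsto_atTop]
  intro ε hε
  have hδ : 0 < ε * (1 - r) / 2 := by
    have : 0 < 1 - r := by linarith
    positivity
  obtain ⟨N, hN⟩ := Metric.tendsto_atTop.mp hw _ hδ
  have claim : ∀ m : ℕ, v (N + m) ≤ r ^ m * v N + ε / 2 := by
    intro m
    induction m with
    | zero => simp; linarith [hε, hv0 N]
    | succ m ih =>
      have h1 : v (N + m + 1) ≤ r * v (N + m) + w (N + m + 1) := hrec _
      have h2 : w (N + m + 1) < ε * (1 - r) / 2 := by
        have := hN (N + m + 1) (by omega)
        rw [Real.dist_eq, sub_zero] at this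
        exact lt_of_le_of_lt (le_abs_self _) this
      have h3 : N + (m + 1) = N + m + 1 := by omega
      rw [h3, pow_succ]
      have h4 : r * v (N + m) ≤ r * (r ^ m * v N + ε / 2) :=
        mul_le_mul_of_nonneg_left ih hr0
      have h5 : r * (ε / 2) ≤ ε / 2 := by nlinarith
      nlinarith [h1]
  obtain ⟨M, hM⟩ : ∃ M : ℕ, ∀ m ≥ M, r ^ m * v N < ε / 2 := by
    have h := (tendsto_pow_atTop_nhds_zero_of_lt_one hr0 hr1).mul_const (v N)
    rw [zero_mul] at h
    obtain ⟨M, hM⟩ := Metric.tendsto_atTop.mp h _ (by linarith : (0:ℝ) < ε / 2)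
    refine ⟨M, fun m hm => ?_⟩
    have := hM m hm
    rw [Real.dist_eq, sub_zero] at this
    exact lt_of_le_of_lt (le_abs_self _) this
  refine ⟨N + M, fun n hn => ?_⟩
  have h6 : v n ≤ r ^ (n - N) * v N + ε / 2 := by
    have := claim (n - N)
    rwa [Nat.add_sub_cancel' (by omega : N ≤ n)] at this
  have h7 := hM (n - N) (by omega)
  rw [Real.dist_eq, sub_zero, abs_of_nonneg (hv0 n)]
  linarith
open Finset

lemma gas2_telesQ {X : Type*} [Ring X] (b : ℕ → X) (ρ : X) (x : ℤ → X) (n : ℤ) (m : ℕ) :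
    ∑ i ∈ Finset.range (m + 1), b i * x (n - (i : ℤ)) =
      (∑ j ∈ Finset.range (m + 1), b j * ρ ^ (m - j)) * x (n - (m : ℤ)) +
      ∑ i ∈ Finset.range m, (∑ j ∈ Finset.range (i + 1), b j * ρ ^ (i - j)) *
        (x (n - (i : ℤ)) - ρ * x (n - (i : ℤ) - 1)) := by
  induction m with
  | zero => simp
  | succ m ih =>
    rw [Finset.sum_range_succ (f := fun i => b i * x (n - (i : ℤ))), ih,
      Finset.sum_range_succ (f := fun i => (∑ j ∈ Finset.range (i + 1), b j * ρ ^ (i - j)) *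
        (x (n - (i : ℤ)) - ρ * x (n - (i : ℤ) - 1)))]
    have hQ : (∑ j ∈ Finset.range (m + 1 + 1), b j * ρ ^ (m + 1 - j)) =
        (∑ j ∈ Finset.range (m + 1), b j * ρ ^ (m - j)) * ρ + b (m + 1) := by
      rw [Finset.sum_range_succ, Finset.sum_mul]
      congr 1
      · refine Finset.sum_congr rfl fun j hj => ?_
        rw [mul_assoc, ← pow_succ]
        congr 2
        have := Finset.mem_range.mp hj
        omega
      · simp
    have hc : (((m + 1 : ℕ)) : ℤ) = (m : ℤ) + 1 := by push_cast; ring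
    rw [hQ, hc]
    have hc2 : n - ((m : ℤ) + 1) = n - (m : ℤ) - 1 := by ring
    rw [hc2]
    noncomm_ring

lemma gas2_telesP {X : Type*} [Ring X] (a : ℕ → X) (ρ : X) (x : ℤ → X) (n : ℤ) (m : ℕ) :
    ∑ i ∈ Finset.range (m + 1), a i * x (n - (i : ℤ)) =
      ρ * x n - (ρ ^ (m + 1) - ∑ j ∈ Finset.range (m + 1), a j * ρ ^ (m - j)) * x (n - (m : ℤ)) -
      ∑ i ∈ Finset.range m, (ρ ^ (i + 1) - ∑ j ∈ Finset.range (i + 1), a j * ρ ^ (i - j)) *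
        (x (n - (i : ℤ)) - ρ * x (n - (i : ℤ) - 1)) := by
  induction m with
  | zero => simp [sub_mul]
  | succ m ih =>
    rw [Finset.sum_range_succ (f := fun i => a i * x (n - (i : ℤ))), ih,
      Finset.sum_range_succ (f := fun i => (ρ ^ (i + 1) - ∑ j ∈ Finset.range (i + 1), a j * ρ ^ (i - j)) *
        (x (n - (i : ℤ)) - ρ * x (n - (i : ℤ) - 1)))]
    have hP : (ρ ^ (m + 1 + 1) - ∑ j ∈ Finset.range (m + 1 + 1), a j * ρ ^ (m + 1 - j)) =
        (ρ ^ (m + 1) - ∑ j ∈ Finset.range (m + 1), a j * ρ ^ (m - j)) * ρ - a (m + 1) := by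
      rw [Finset.sum_range_succ, sub_mul, Finset.sum_mul, pow_succ]
      have : (∑ j ∈ Finset.range (m + 1), a j * ρ ^ (m - j) * ρ) =
          ∑ j ∈ Finset.range (m + 1), a j * ρ ^ (m + 1 - j) := by
        refine Finset.sum_congr rfl fun j hj => ?_
        rw [mul_assoc, ← pow_succ]
        congr 2
        have := Finset.mem_range.mp hj
        omega
      rw [this]
      simp only [Nat.sub_self, pow_zero, mul_one, pow_succ]
      abel
    have hc : (((m + 1 : ℕ)) : ℤ) = (m : ℤ) + 1 := by push_cast; ring
    rw [hP, hc]
    have hc2 : n - ((m : ℤ) + 1) = n - (m : ℤ) - 1 := by ring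
    rw [hc2]
    noncomm_ring

open Filter Finset

lemma gas2_normBound {X : Type*} [NormedRing X] (σ : ℝ) (hσ : 0 ≤ σ) (m : ℕ)
    (A B' z : ℕ → X) (Bd : ℝ) (hBd : 0 ≤ Bd)
    (hz : ∀ i, i < m → ‖z i‖ ≤ Bd) (S : X)
    (hS : ‖S‖ ≤ σ * ‖∑ i ∈ Finset.range m, B' i * z i‖) :
    ‖(∑ i ∈ Finset.range m, A i * z i) + S‖ ≤
      (∑ i ∈ Finset.range m, (‖A i‖ + σ * ‖B' i‖)) * Bd := by
  have key : ∀ C : ℕ → X, ‖∑ i ∈ Finset.range m, C i * z i‖ ≤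
      ∑ i ∈ Finset.range m, ‖C i‖ * Bd := by
    intro C
    refine le_trans (norm_sum_le _ _) (Finset.sum_le_sum fun i hi => ?_)
    exact le_trans (norm_mul_le _ _)
      (mul_le_mul_of_nonneg_left (hz i (Finset.mem_range.mp hi)) (norm_nonneg _))
  calc ‖(∑ i ∈ Finset.range m, A i * z i) + S‖
      ≤ ‖∑ i ∈ Finset.range m, A i * z i‖ + ‖S‖ := norm_add_le _ _
    _ ≤ (∑ i ∈ Finset.range m, ‖A i‖ * Bd) +
        σ * (∑ i ∈ Finset.range m, ‖B' i‖ * Bd) := by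
        refine add_le_add (key A) (le_trans hS ?_)
        exact mul_le_mul_of_nonneg_left (key B') hσ
    _ = (∑ i ∈ Finset.range m, (‖A i‖ + σ * ‖B' i‖)) * Bd := by
        rw [Finset.sum_mul, Finset.mul_sum, ← Finset.sum_add_distrib]
        refine Finset.sum_congr rfl fun i _ => by ring



/-- **Theorem 1 (gas2).** In a real or complex Banach algebra `X` with identity,
with `‖gₙ(ξ)‖ ≤ σ‖ξ‖` (`σ > 0`), every solution of
`x_{n+1} = ∑ᵢ aᵢ x_{n−i} + gₙ(∑ᵢ bᵢ x_{n−i})` converges to zero if either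
(a) `∑_{i=0}^{k} (‖aᵢ‖ + σ‖bᵢ‖) < 1`, or
(b) `P` and `Q` have a common invertible root `ρ` with `‖ρ‖ < 1` and
`∑_{i=0}^{k−1} (‖pᵢ‖ + σ‖qᵢ‖) < 1`, where `pᵢ = ρ^{i+1} − a₀ρ^i − ⋯ − aᵢ` and
`qᵢ = b₀ρ^i + ⋯ + bᵢ`. -/
theorem global_attractivity_linear_argument_equation
    {𝕜 X : Type*} [RCLike 𝕜] [NormedRing X] [NormOneClass X]
    [NormedAlgebra 𝕜 X] [CompleteSpace X]
    (k : ℕ) (hk : 0 < k)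
    (g : ℕ → X → X) (σ : ℝ) (hσ : 0 < σ)
    (hg : ∀ (n : ℕ) (ξ : X), ‖g n ξ‖ ≤ σ * ‖ξ‖)
    (a b : ℕ → X)
    (hcond :
      (∑ i ∈ Finset.range (k + 1), (‖a i‖ + σ * ‖b i‖) < 1) ∨
      (∃ ρ : X, IsUnit ρ ∧ ‖ρ‖ < 1 ∧
        ρ ^ (k + 1) - ∑ i ∈ Finset.range (k + 1), a i * ρ ^ (k - i) = 0 ∧
        ∑ i ∈ Finset.range (k + 1), b i * ρ ^ (k - i) = 0 ∧
        ∑ i ∈ Finset.range k,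
          (‖ρ ^ (i + 1) - ∑ j ∈ Finset.range (i + 1), a j * ρ ^ (i - j)‖ +
            σ * ‖∑ j ∈ Finset.range (i + 1), b j * ρ ^ (i - j)‖) < 1))
    (x : ℤ → X)
    (hx : ∀ n : ℤ, 0 ≤ n → x (n + 1) =
      ∑ i ∈ Finset.range (k + 1), a i * x (n - (i : ℤ)) +
        g n.toNat (∑ i ∈ Finset.range (k + 1), b i * x (n - (i : ℤ)))) :
    Filter.Tendsto (fun n : ℕ => x (n : ℤ)) Filter.atTop (nhds 0) := by
  rw [show (fun n : ℕ => x (n : ℤ)) = fun n : ℕ => (fun m : ℤ => x m) (n : ℤ) from rfl]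
  rcases hcond with hA | ⟨ρ, -, hρ, hP, hQ, hs⟩
  · -- case (a)
    set c : ℝ := ∑ i ∈ Finset.range (k + 1), (‖a i‖ + σ * ‖b i‖) with hc
    have hc0 : 0 ≤ c := Finset.sum_nonneg fun i _ => by positivity
    rw [tendsto_zero_iff_norm_tendsto_zero]
    apply gas2_windowA k c hc0 hA (fun n => ‖x n‖) (fun n => norm_nonneg _)
    intro n hn B hB
    have hB0 : 0 ≤ B := le_trans (norm_nonneg (x (n - (0 : ℕ)))) (hB 0 (Nat.zero_le k))
    show ‖x (n + 1)‖ ≤ c * B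
    rw [hx n hn]
    exact gas2_normBound σ hσ.le (k + 1) a b (fun i => x (n - (i : ℤ))) B hB0
      (fun i hi => hB i (by omega)) _ (hg _ _)
  · -- case (b)
    set P : ℕ → X := fun i => ρ ^ (i + 1) - ∑ j ∈ Finset.range (i + 1), a j * ρ ^ (i - j)
      with hPdef
    set Q : ℕ → X := fun i => ∑ j ∈ Finset.range (i + 1), b j * ρ ^ (i - j) with hQdef
    set y : ℤ → X := fun n => x n - ρ * x (n - 1) with hy
    have hrecy : ∀ n : ℤ, 0 ≤ n → y (n + 1) =
        (∑ i ∈ Finset.range k, (-P i) * y (n - (i : ℤ))) +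
          g n.toNat (∑ i ∈ Finset.range k, Q i * y (n - (i : ℤ))) := by
      intro n hn
      have hAeq := gas2_telesP a ρ x n k
      have hBeq := gas2_telesQ b ρ x n k
      rw [hP, zero_mul, sub_zero] at hAeq
      rw [hQ, zero_mul, zero_add] at hBeq
      show x (n + 1) - ρ * x (n + 1 - 1) = _
      rw [hx n hn, hAeq, hBeq]
      have h1 : n + 1 - 1 = n := by ring
      rw [h1]
      have h2 : ∀ i : ℕ, y (n - (i : ℤ)) = x (n - (i : ℤ)) - ρ * x (n - (i : ℤ) - 1) :=
        fun i => rfl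
      simp only [neg_mul, Finset.sum_neg_distrib, ← h2]
      abel
    have hyt : Tendsto (fun n : ℕ => ‖y n‖) atTop (nhds 0) := by
      set c : ℝ := ∑ i ∈ Finset.range k, (‖P i‖ + σ * ‖Q i‖) with hc
      have hc0 : 0 ≤ c := Finset.sum_nonneg fun i _ => by positivity
      have hkk : k - 1 + 1 = k := by omega
      apply gas2_windowA (k - 1) c hc0 hs (fun n => ‖y n‖) (fun n => norm_nonneg _)
      intro n hn B hB
      have hB0 : 0 ≤ B := le_trans (norm_nonneg (y (n - (0 : ℕ)))) (hB 0 (Nat.zero_le _))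
      show ‖y (n + 1)‖ ≤ c * B
      rw [hrecy n hn]
      have hnorm : (∑ i ∈ Finset.range k, (‖P i‖ + σ * ‖Q i‖)) =
          ∑ i ∈ Finset.range k, (‖-P i‖ + σ * ‖Q i‖) :=
        Finset.sum_congr rfl fun i _ => by rw [norm_neg]
      refine le_trans (gas2_normBound σ hσ.le k (fun i => -P i) Q
        (fun i => y (n - (i : ℤ))) B hB0 (fun i hi => hB i (by omega)) _ (hg _ _))
        (le_of_eq ?_)
      rw [hc, hnorm]
    rw [tendsto_zero_iff_norm_tendsto_zero]
    apply gas2_lemB ‖ρ‖ (norm_nonneg _) hρ _ (fun n : ℕ => ‖y (n : ℤ)‖)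
      (fun n => norm_nonneg _) _ hyt
    intro n
    have hxy : x ((n : ℤ) + 1) = ρ * x (n : ℤ) + y ((n : ℤ) + 1) := by
      have : y ((n : ℤ) + 1) = x ((n : ℤ) + 1) - ρ * x ((n : ℤ) + 1 - 1) := rfl
      rw [this, add_sub_cancel_right]
      abel
    have hcast : ((n + 1 : ℕ) : ℤ) = (n : ℤ) + 1 := by push_cast; ring
    simp only [hcast, hxy]
    exact le_trans (norm_add_le _ _) (by gcongr; exact norm_mul_le _ _)
end

section
/- Let X be a real or complex Banach algebra with identity, let k be a fixed positive integer, and let g_n : X → X (n = 0,1,2,…) satisfy ‖g_n(ξ)‖ ≤ σ‖ξ‖ for all ξ ∈ X and all n, for some real σ > 0. Let a be an invertible element of X with ‖a‖ < 1 and let b_0, …, b_k ∈ X with b_k ≠ 0 satisfy b_0 a^k + b_1 a^{k−1} + b_2 a^{k−2} + ⋯ + b_k = 0 and Σ_{i=0}^{k−1} ‖b_0 a^i + b_1 a^{i−1} + ⋯ + b_i‖ < 1/σ. Then every solution (x_n)_{n ≥ −k} of the difference equation x_{n+1} = a x_n + g_n(b_0 x_n + b_1 x_{n−1} + ⋯ +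 b_k x_{n−k}) converges to zero. -/
/-!
Writing `yₙ = xₙ - a xₙ₋₁` and `cᵢ = b₀aⁱ + ⋯ + bᵢ` (so that `cᵢ₊₁ = cᵢ a + bᵢ₊₁` and `c_k = 0`),
summation by parts turns `b₀xₙ + ⋯ + b_k xₙ₋ₖ` into `c₀yₙ + ⋯ + c_{k-1}yₙ₋ₖ₊₁`. The equation becomes
`yₙ₊₁ = gₙ(c₀yₙ + ⋯ + c_{k-1}yₙ₋ₖ₊₁)`, so `‖yₙ₊₁‖` is at most `σ ∑ ‖cᵢ‖ < 1` times the largest of the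
previous `k` values of `‖y‖`, and `y` decays geometrically. Finally `xₙ₊₁ = a xₙ + yₙ₊₁` with
`‖a‖ < 1` and `yₙ → 0` forces `xₙ → 0`.
-/

open Filter Finset Topology

section WindowContraction

variable {u : ℕ → ℝ} {r : ℝ}

theorem tendsto_zero_of_window_contraction {k : ℕ} (hu : ∀ n, 0 ≤ u n) (hr0 : 0 ≤ r)
    (hr1 : r < 1)
    (hstep : ∀ n D, 0 ≤ D → (∀ j < k, u (n + j) ≤ D) → u (n + k) ≤ r * D) :
    Tendsto u atTop (𝓝 0) := by
  set B := ∑ j ∈ range k, u j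
  have hB : 0 ≤ B := sum_nonneg fun j _ => hu j
  have hbounded : ∀ n, u n ≤ B := by
    intro n
    induction n using Nat.strong_induction_on with
    | _ n ih =>
      by_cases hn : n < k
      · exact single_le_sum (fun j _ => hu j) (mem_range.2 hn)
      · obtain ⟨m, rfl⟩ := Nat.exists_eq_add_of_le' (not_lt.1 hn)
        calc u (m + k) ≤ r * B := hstep m B hB fun j hj => ih _ (by omega)
          _ ≤ B := mul_le_of_le_one_left hB hr1.le
  have hdecay : ∀ m n, u (m * k + n) ≤ r ^ m * B := by
    intro m
    induction m with
    | zero => simpa using hbounded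
    | succ m ih =>
      intro n
      calc u ((m + 1) * k + n) = u (m * k + n + k) := by ring_nf
        _ ≤ r * (r ^ m * B) := hstep _ _ (by positivity) fun j _ => by
            simpa only [add_assoc] using ih (n + j)
        _ = r ^ (m + 1) * B := by ring
  refine tendsto_order.2 ⟨fun c hc => .of_forall fun n => hc.trans_le (hu n), fun ε hε => ?_⟩
  have hgeom : Tendsto (fun m => r ^ m * B) atTop (𝓝 0) := by
    simpa using (tendsto_pow_atTop_nhds_zero_of_lt_one hr0 hr1).mul_const B
  obtain ⟨m, hm⟩ := (hgeom.eventually (gt_mem_nhds hε)).exists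
  refine eventually_atTop.2 ⟨m * k, fun n hn => ?_⟩
  obtain ⟨d, rfl⟩ := Nat.exists_eq_add_of_le hn
  exact (hdecay m d).trans_lt hm

theorem tendsto_zero_of_le_mul_add {e : ℕ → ℝ} (hu : ∀ n, 0 ≤ u n) (hr0 : 0 ≤ r) (hr1 : r < 1)
    (he : Tendsto e atTop (𝓝 0)) (hstep : ∀ n, u (n + 1) ≤ r * u n + e n) :
    Tendsto u atTop (𝓝 0) := by
  refine tendsto_order.2 ⟨fun c hc => .of_forall fun n => hc.trans_le (hu n), fun ε hε => ?_⟩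
  have hε2 : 0 < ε / 2 := half_pos hε
  obtain ⟨N, hN⟩ := eventually_atTop.1
    (he.eventually (gt_mem_nhds (mul_pos (sub_pos.2 hr1) hε2)))
  -- Once `e ≤ (1 - r) ε/2`, the excess of `u` over `ε/2` contracts by the factor `r`.
  set v : ℕ → ℝ := fun m => max (u (N + m) - ε / 2) 0
  have hv : Tendsto v atTop (𝓝 0) := by
    refine tendsto_zero_of_window_contraction (k := 1) (fun m => le_max_right _ _) hr0 hr1 ?_
    intro m D hD hwin
    have hprev : u (N + m) - ε / 2 ≤ D := (le_max_left _ _).trans (hwin 0 one_pos)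
    have hnext : u (N + (m + 1)) ≤ r * u (N + m) + e (N + m) := hstep (N + m)
    have he' := hN (N + m) (Nat.le_add_right _ _)
    exact max_le (by nlinarith) (mul_nonneg hr0 hD)
  obtain ⟨M, hM⟩ := eventually_atTop.1 (hv.eventually (gt_mem_nhds hε2))
  refine eventually_atTop.2 ⟨N + M, fun n hn => ?_⟩
  obtain ⟨d, rfl⟩ := Nat.exists_eq_add_of_le hn
  have := (le_max_left _ _).trans_lt (hM (M + d) (Nat.le_add_right _ _))
  rw [← add_assoc] at this
  linarith

end WindowContraction

theorem tendsto_zero_of_eq_mul_add {R : Type*} [NormedRing R] {a : R} (ha : ‖a‖ < 1)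
    {x v : ℕ → R} (hx : ∀ n, x (n + 1) = a * x n + v n) (hv : Tendsto v atTop (𝓝 0)) :
    Tendsto x atTop (𝓝 0) := by
  rw [tendsto_zero_iff_norm_tendsto_zero] at hv ⊢
  refine tendsto_zero_of_le_mul_add (fun n => norm_nonneg _) (norm_nonneg a) ha hv fun n => ?_
  calc ‖x (n + 1)‖ ≤ ‖a * x n‖ + ‖v n‖ := hx n ▸ norm_add_le _ _
    _ ≤ ‖a‖ * ‖x n‖ + ‖v n‖ := by gcongr; exact norm_mul_le _ _

theorem tendsto_zero_of_delay_contraction {E : Type*} [SeminormedAddCommGroup E] {y : ℤ → E}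
    {k : ℕ} {r : ℝ} (hr0 : 0 ≤ r) (hr1 : r < 1)
    (hstep : ∀ n : ℕ, ∀ D, (∀ i < k, ‖y (n - i)‖ ≤ D) → ‖y (n + 1)‖ ≤ r * D) :
    Tendsto (fun n : ℕ => y (n + 1)) atTop (𝓝 0) := by
  rw [tendsto_zero_iff_norm_tendsto_zero]
  have hu : Tendsto (fun j : ℕ => ‖y (j + 1 - k)‖) atTop (𝓝 0) := by
    refine tendsto_zero_of_window_contraction (k := k) (fun _ => norm_nonneg _) hr0 hr1 ?_
    intro n D _ hwin
    have := hstep n D fun i hi => by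
      convert hwin (k - 1 - i) (by omega) using 3
      omega
    convert this using 3
    push_cast
    ring
  refine ((tendsto_add_atTop_iff_nat k).2 hu).congr fun n => ?_
  congr 2
  push_cast
  ring

section HornerCoeff

variable {R : Type*} [Ring R] (b : ℕ → R) (a : R)

def hornerCoeff (i : ℕ) : R :=
  ∑ j ∈ range (i + 1), b j * a ^ (i - j)

theorem hornerCoeff_zero : hornerCoeff b a 0 = b 0 := by
  simp [hornerCoeff]

theorem hornerCoeff_succ (i : ℕ) : hornerCoeff b a (i + 1) = hornerCoeff b a i * a + b (i + 1) := by
  rw [hornerCoeff, sum_range_succ, Nat.sub_self, pow_zero, mul_one, hornerCoeff, sum_mul]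
  congr 1
  refine sum_congr rfl fun j hj => ?_
  rw [mul_assoc, ← pow_succ, Nat.sub_add_comm (Nat.lt_succ_iff.1 (mem_range.1 hj))]

theorem sum_mul_sub_eq_hornerCoeff_by_parts (x : ℤ → R) (n : ℤ) (m : ℕ) :
    ∑ i ∈ range (m + 1), b i * x (n - i) =
      ∑ i ∈ range m, hornerCoeff b a i * (x (n - i) - a * x (n - i - 1)) +
        hornerCoeff b a m * x (n - m) := by
  induction m with
  | zero => simp [hornerCoeff_zero]
  | succ m ih =>
    rw [sum_range_succ, ih, sum_range_succ, hornerCoeff_succ, Nat.cast_succ, ← sub_sub]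
    noncomm_ring

end HornerCoeff

theorem global_attractivity_single_linear_term_general
    {X : Type*} [NormedRing X]
    (k : ℕ)
    (g : ℕ → X → X) (σ : ℝ) (hσ : 0 < σ)
    (hg : ∀ (n : ℕ) (ξ : X), ‖g n ξ‖ ≤ σ * ‖ξ‖)
    (a : X) (ha1 : ‖a‖ < 1)
    (b : ℕ → X)
    (hroot : ∑ i ∈ Finset.range (k + 1), b i * a ^ (k - i) = 0)
    (hsum : ∑ i ∈ Finset.range k, ‖∑ j ∈ Finset.range (i + 1), b j * a ^ (i - j)‖ < 1 / σ)
    (x : ℤ → X)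
    (hx : ∀ n : ℤ, 0 ≤ n → x (n + 1) =
      a * x n + g n.toNat (∑ i ∈ Finset.range (k + 1), b i * x (n - (i : ℤ)))) :
    Filter.Tendsto (fun n : ℕ => x (n : ℤ)) Filter.atTop (nhds 0) := by
  set y : ℤ → X := fun n => x n - a * x (n - 1)
  have hy : ∀ n : ℕ, y (n + 1) = g n (∑ i ∈ range k, hornerCoeff b a i * y (n - i)) := by
    intro n
    have hparts := sum_mul_sub_eq_hornerCoeff_by_parts b a x n k
    rw [show hornerCoeff b a k = 0 from hroot, zero_mul, add_zero] at hparts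
    simp only [y, hx n n.cast_nonneg, Int.toNat_natCast, hparts, add_sub_cancel_right,
      add_sub_cancel_left]
  have hcontr : (∑ i ∈ range k, ‖hornerCoeff b a i‖) * σ < 1 := (lt_div_iff₀ hσ).1 hsum
  have hy0 : Tendsto (fun n : ℕ => y (n + 1)) atTop (𝓝 0) := by
    refine tendsto_zero_of_delay_contraction (k := k) (by positivity) hcontr fun n D hD => ?_
    calc ‖y (n + 1)‖ ≤ σ * ∑ i ∈ range k, ‖hornerCoeff b a i‖ * ‖y (n - i)‖ := by
          rw [hy]
          refine (hg _ _).trans (mul_le_mul_of_nonneg_left ?_ hσ.le)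
          exact (norm_sum_le _ _).trans (sum_le_sum fun i _ => norm_mul_le _ _)
      _ ≤ σ * ∑ i ∈ range k, ‖hornerCoeff b a i‖ * D := by
          gcongr with i hi; exact hD i (mem_range.1 hi)
      _ = (∑ i ∈ range k, ‖hornerCoeff b a i‖) * σ * D := by rw [← sum_mul]; ring
  refine tendsto_zero_of_eq_mul_add ha1 (fun n => ?_) hy0
  simp [y]

/-- **Corollary 1 (gasc1).** In a real or complex Banach algebra `X` with identity,
with `‖gₙ(ξ)‖ ≤ σ‖ξ‖` (`σ > 0`), let `a` be invertible with `‖a‖ < 1` and let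
`b₀, …, b_k` with `b_k ≠ 0` satisfy `b₀a^k + b₁a^{k−1} + ⋯ + b_k = 0` and
`∑_{i=0}^{k−1} ‖b₀aⁱ + b₁a^{i−1} + ⋯ + bᵢ‖ < 1/σ`. Then every solution of
`x_{n+1} = a xₙ + gₙ(b₀xₙ + b₁x_{n−1} + ⋯ + b_k x_{n−k})` converges to zero. -/
theorem global_attractivity_single_linear_term
    {𝕜 X : Type*} [RCLike 𝕜] [NormedRing X] [NormOneClass X]
    [NormedAlgebra 𝕜 X] [CompleteSpace X]
    (k : ℕ) (hk : 0 < k)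
    (g : ℕ → X → X) (σ : ℝ) (hσ : 0 < σ)
    (hg : ∀ (n : ℕ) (ξ : X), ‖g n ξ‖ ≤ σ * ‖ξ‖)
    (a : X) (ha : IsUnit a) (ha1 : ‖a‖ < 1)
    (b : ℕ → X) (hbk : b k ≠ 0)
    (hroot : ∑ i ∈ Finset.range (k + 1), b i * a ^ (k - i) = 0)
    (hsum : ∑ i ∈ Finset.range k, ‖∑ j ∈ Finset.range (i + 1), b j * a ^ (i - j)‖ < 1 / σ)
    (x : ℤ → X)
    (hx : ∀ n : ℤ, 0 ≤ n → x (n + 1) =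
      a * x n + g n.toNat (∑ i ∈ Finset.range (k + 1), b i * x (n - (i : ℤ)))) :
    Filter.Tendsto (fun n : ℕ => x (n : ℤ)) Filter.atTop (nhds 0) :=
  global_attractivity_single_linear_term_general k g σ hσ hg a ha1 b hroot hsum x hx
end

section
/- Let X be a real or complex Banach algebra with identity, let k be a fixed positive integer, and let g_n : X → X (n = 0,1,2,…) satisfy ‖g_n(ξ)‖ ≤ σ‖ξ‖ for all ξ ∈ X and all n, for some real σ > 0. Let b be an invertible element of X with ‖b‖ < 1 and let a_0, …, a_k ∈ X with a_k ≠ 0 satisfy a_0 b^k + a_1 b^{k−1} + ⋯ + a_k = b^{k+1} and Σ_{i=0}^{k−1} ‖b^{i+1} − a_0 b^i − a_1 b^{i−1} − ⋯ − a_i‖ < 1 − σ. Then every solution (x_n)_{n ≥ −k} of the difference equation x_{n+1} = a_0 x_n + a_1 x_{n−1} + ⋯ + a_k x_{n−k} + g_n(x_n − b x_{n−1}) converges to zero. -/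
/-!
Write `cᵢ = b^{i+1} - (a₀bⁱ + ⋯ + aᵢ)`, so that `c_k = 0` and `a_{i+1} = cᵢ b - c_{i+1}`.
Summation by parts turns the equation into a delay recursion for `yₙ = xₙ - b x_{n-1}`:
`y_{n+1} = gₙ(yₙ) - ∑_{i<k} cᵢ y_{n-i}`. Hence `‖y_{n+1}‖ ≤ θ · max_{i ≤ k} ‖y_{n-i}‖` with
`θ = ∑ ‖cᵢ‖ + σ < 1`, so the sliding maximum of `‖yₙ‖` is nonincreasing and contracts by `θ`
every `k + 1` steps; thus `yₙ → 0`. Finally `x_{n+1} = b xₙ + y_{n+1}` with `‖b‖ < 1` gives `xₙ → 0`.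
-/

open Filter Topology Finset

lemma tendsto_zero_of_le_mul_add_s6 {β : ℝ} (hβ0 : 0 ≤ β) (hβ1 : β < 1) {u e : ℕ → ℝ}
    (hu : 0 ≤ u) (hrec : ∀ n, u (n + 1) ≤ β * u n + e n) (he : Tendsto e atTop (𝓝 0)) :
    Tendsto u atTop (𝓝 0) := by
  refine tendsto_order.2 ⟨fun a ha => Eventually.of_forall fun n => ha.trans_le (hu n),
    fun ε hε => ?_⟩
  obtain ⟨N, hN⟩ := eventually_atTop.1
    ((tendsto_order.1 he).2 _ (by nlinarith : 0 < (1 - β) * (ε / 2)))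
  -- `ε / 2` is the fixed point of `v ↦ β v + (1 - β) ε / 2`
  have hcontract : ∀ m, u (N + m) - ε / 2 ≤ β ^ m * (u N - ε / 2) := by
    intro m
    induction m with
    | zero => simp
    | succ m ih =>
      calc u (N + (m + 1)) - ε / 2 ≤ β * (u (N + m) - ε / 2) := by
            rw [← add_assoc]
            linarith [hrec (N + m), hN (N + m) (Nat.le_add_right N m)]
        _ ≤ β * (β ^ m * (u N - ε / 2)) := mul_le_mul_of_nonneg_left ih hβ0
        _ = β ^ (m + 1) * (u N - ε / 2) := by ring
  have hpow : Tendsto (fun m => β ^ m * (u N - ε / 2)) atTop (𝓝 0) := by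
    simpa using (tendsto_pow_atTop_nhds_zero_of_lt_one hβ0 hβ1).mul_const (u N - ε / 2)
  obtain ⟨M, hM⟩ := eventually_atTop.1 ((tendsto_order.1 hpow).2 _ (half_pos hε))
  refine eventually_atTop.2 ⟨N + M, fun n hn => ?_⟩
  obtain ⟨m, rfl⟩ := Nat.exists_eq_add_of_le (le_trans (Nat.le_add_right N M) hn)
  linarith [hcontract m, hM m (by omega)]

lemma tendsto_zero_of_antitone_of_le_mul {θ : ℝ} (hθ : θ < 1) {M : ℕ → ℝ} (hM : 0 ≤ M)
    (hanti : Antitone M) (p : ℕ) (h : ∀ n, M (n + p) ≤ θ * M n) :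
    Tendsto M atTop (𝓝 0) := by
  have hbdd : BddBelow (Set.range M) := ⟨0, by rintro _ ⟨n, rfl⟩; exact hM n⟩
  have hlim : Tendsto M atTop (𝓝 (⨅ n, M n)) := tendsto_atTop_ciInf hanti hbdd
  have hL0 : 0 ≤ ⨅ n, M n := le_ciInf hM
  have hLθ : ⨅ n, M n ≤ θ * ⨅ n, M n :=
    le_of_tendsto_of_tendsto ((tendsto_add_atTop_iff_nat p).2 hlim) (hlim.const_mul θ)
      (Eventually.of_forall h)
  rwa [show ⨅ n, M n = 0 by nlinarith] at hlim

noncomputable def windowMax (u : ℤ → ℝ) (k : ℕ) (n : ℤ) : ℝ :=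
  (range (k + 1)).sup' nonempty_range_add_one fun i => u (n - i)

section windowMax

variable {u : ℤ → ℝ} {k : ℕ}

lemma le_windowMax {i : ℕ} (hi : i ≤ k) (n : ℤ) : u (n - i) ≤ windowMax u k n :=
  le_sup' (fun i : ℕ => u (n - i)) (mem_range.2 (Nat.lt_succ_of_le hi))

lemma self_le_windowMax (n : ℤ) : u n ≤ windowMax u k n := by
  simpa using le_windowMax (u := u) (Nat.zero_le k) n

lemma windowMax_succ_le {n : ℤ} (h : u (n + 1) ≤ windowMax u k n) :
    windowMax u k (n + 1) ≤ windowMax u k n := by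
  refine sup'_le _ _ fun i hi => ?_
  rcases i with _ | i
  · simpa using h
  · rw [show n + 1 - ((i + 1 : ℕ) : ℤ) = n - i by push_cast; ring]
    exact le_windowMax (u := u) (by have := mem_range.1 hi; omega) n

lemma tendsto_zero_of_le_mul_windowMax {θ : ℝ} (hu : 0 ≤ u) (hθ0 : 0 ≤ θ) (hθ1 : θ < 1)
    (h : ∀ n : ℕ, u (n + 1) ≤ θ * windowMax u k n) :
    Tendsto (fun n : ℕ => u n) atTop (𝓝 0) := by
  set M : ℕ → ℝ := fun n => windowMax u k n
  have hM0 : 0 ≤ M := fun n => (hu n).trans (self_le_windowMax n)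
  have hanti : Antitone M := antitone_nat_of_succ_le fun n => by
    simpa [M] using windowMax_succ_le ((h n).trans (mul_le_of_le_one_left (hM0 n) hθ1.le))
  have hcontract : ∀ n, M (n + (k + 1)) ≤ θ * M n := fun n =>
    sup'_le _ _ fun i hi => by
      have hi : i ≤ k := Nat.le_of_lt_succ (mem_range.1 hi)
      calc u ((n + (k + 1) : ℕ) - i) = u ((n + (k - i) : ℕ) + 1) := by congr 1; omega
        _ ≤ θ * M (n + (k - i)) := h _
        _ ≤ θ * M n := mul_le_mul_of_nonneg_left (hanti (Nat.le_add_right n _)) hθ0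
  exact squeeze_zero (fun n => hu n) (fun n => self_le_windowMax n)
    (tendsto_zero_of_antitone_of_le_mul hθ1 hM0 hanti (k + 1) hcontract)

end windowMax

section hornerDefect

variable {R : Type*} [Ring R] (a : ℕ → R) (b : R)

def hornerDefect (i : ℕ) : R :=
  b ^ (i + 1) - ∑ j ∈ range (i + 1), a j * b ^ (i - j)

lemma hornerDefect_zero : hornerDefect a b 0 = b - a 0 := by
  simp [hornerDefect]

lemma hornerDefect_succ (i : ℕ) :
    hornerDefect a b (i + 1) = hornerDefect a b i * b - a (i + 1) := by
  have hshift : (∑ j ∈ range (i + 1), a j * b ^ (i - j)) * b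
      = ∑ j ∈ range (i + 1), a j * b ^ (i + 1 - j) := by
    rw [sum_mul]
    refine sum_congr rfl fun j hj => ?_
    rw [mul_assoc, ← pow_succ, Nat.sub_add_comm (Nat.le_of_lt_succ (mem_range.1 hj))]
  rw [hornerDefect, hornerDefect, sub_mul, hshift, sum_range_succ _ (i + 1), ← pow_succ]
  simp only [Nat.sub_self, pow_zero, mul_one]
  abel

/-- Summation by parts against the Horner defects. -/
lemma sum_mul_eq_mul_sub_sum_hornerDefect_mul (u : ℕ → R) (k : ℕ) :
    ∑ i ∈ range (k + 1), a i * u i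
      = b * u 0 - ∑ i ∈ range k, hornerDefect a b i * (u i - b * u (i + 1))
        - hornerDefect a b k * u k := by
  induction k with
  | zero => simp [hornerDefect_zero, sub_mul]
  | succ k ih =>
    rw [sum_range_succ, ih, sum_range_succ, hornerDefect_succ]
    noncomm_ring

lemma sub_mul_eq_sub_sum_hornerDefect_mul {k : ℕ} (hk : hornerDefect a b k = 0) {x : ℤ → R}
    {n : ℤ} {f : R} (hx : x (n + 1) = ∑ i ∈ range (k + 1), a i * x (n - i) + f) :
    x (n + 1) - b * x n
      = f - ∑ i ∈ range k, hornerDefect a b i * (x (n - i) - b * x (n - i - 1)) := by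
  rw [hx, sum_mul_eq_mul_sub_sum_hornerDefect_mul a b (fun i => x (n - i)) k, hk]
  simp only [Nat.cast_zero, sub_zero, zero_mul, Nat.cast_add, Nat.cast_one, sub_add_eq_sub_sub]
  abel

end hornerDefect

lemma norm_sub_sum_mul_le_mul_windowMax {X : Type*} [NormedRing X] {σ : ℝ} (hσ : 0 ≤ σ)
    (c : ℕ → X) (k : ℕ) (y : ℤ → X) (n : ℤ) {f : X} (hf : ‖f‖ ≤ σ * ‖y n‖) :
    ‖f - ∑ i ∈ range k, c i * y (n - i)‖
      ≤ (∑ i ∈ range k, ‖c i‖ + σ) * windowMax (fun m => ‖y m‖) k n := by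
  calc ‖f - ∑ i ∈ range k, c i * y (n - i)‖
      ≤ ‖f‖ + ∑ i ∈ range k, ‖c i‖ * ‖y (n - i)‖ := by
        refine (norm_sub_le _ _).trans ?_
        gcongr
        exact (norm_sum_le _ _).trans (sum_le_sum fun i _ => norm_mul_le _ _)
    _ ≤ σ * windowMax (fun m => ‖y m‖) k n
        + ∑ i ∈ range k, ‖c i‖ * windowMax (fun m => ‖y m‖) k n := by
      gcongr with i hi
      · exact hf.trans (mul_le_mul_of_nonneg_left (self_le_windowMax (u := fun m => ‖y m‖) n) hσ)
      · exact le_windowMax (u := fun m => ‖y m‖) (mem_range.1 hi).le n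
    _ = (∑ i ∈ range k, ‖c i‖ + σ) * windowMax (fun m => ‖y m‖) k n := by
      rw [add_mul, sum_mul, add_comm]

lemma tendsto_zero_of_tendsto_succ_sub_mul {X : Type*} [NormedRing X] {b : X} (hb : ‖b‖ < 1)
    {x : ℕ → X} (h : Tendsto (fun n => x (n + 1) - b * x n) atTop (𝓝 0)) :
    Tendsto x atTop (𝓝 0) := by
  refine tendsto_zero_iff_norm_tendsto_zero.2 <|
    tendsto_zero_of_le_mul_add_s6 (norm_nonneg b) hb (fun n => norm_nonneg (x n)) (fun n => ?_)
      (tendsto_zero_iff_norm_tendsto_zero.1 h)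
  exact (norm_le_insert' _ (b * x n)).trans (add_le_add_left (norm_mul_le _ _) _)

theorem global_attractivity_single_linear_argument_general
    {X : Type*} [NormedRing X]
    (k : ℕ)
    (g : ℕ → X → X) (σ : ℝ) (hσ : 0 < σ)
    (hg : ∀ (n : ℕ) (ξ : X), ‖g n ξ‖ ≤ σ * ‖ξ‖)
    (b : X) (hb1 : ‖b‖ < 1)
    (a : ℕ → X)
    (hroot : ∑ i ∈ Finset.range (k + 1), a i * b ^ (k - i) = b ^ (k + 1))
    (hsum : ∑ i ∈ Finset.range k,
      ‖b ^ (i + 1) - ∑ j ∈ Finset.range (i + 1), a j * b ^ (i - j)‖ < 1 - σ)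
    (x : ℤ → X)
    (hx : ∀ n : ℤ, 0 ≤ n → x (n + 1) =
      ∑ i ∈ Finset.range (k + 1), a i * x (n - (i : ℤ)) +
        g n.toNat (x n - b * x (n - 1))) :
    Filter.Tendsto (fun n : ℕ => x (n : ℤ)) Filter.atTop (nhds 0) := by
  set y : ℤ → X := fun m => x m - b * x (m - 1)
  have hk : hornerDefect a b k = 0 := sub_eq_zero.2 hroot.symm
  have hy : ∀ n : ℕ, ‖y (n + 1)‖
      ≤ (∑ i ∈ range k, ‖hornerDefect a b i‖ + σ) * windowMax (fun m => ‖y m‖) k n := by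
    intro n
    have hrec := sub_mul_eq_sub_sum_hornerDefect_mul a b hk (hx n (Int.natCast_nonneg n))
    simp only [Int.toNat_natCast] at hrec
    simpa only [y, add_sub_cancel_right, hrec] using
      norm_sub_sum_mul_le_mul_windowMax hσ.le _ k y n (hg n (y n))
  have hθ : ∑ i ∈ range k, ‖hornerDefect a b i‖ < 1 - σ := hsum
  have hy0 : Tendsto (fun n : ℕ => ‖y n‖) atTop (𝓝 0) :=
    tendsto_zero_of_le_mul_windowMax (fun m => norm_nonneg (y m))
      (add_nonneg (sum_nonneg fun i _ => norm_nonneg _) hσ.le) (by linarith) hy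
  refine tendsto_zero_of_tendsto_succ_sub_mul hb1 ?_
  have hy1 := (tendsto_add_atTop_iff_nat (f := fun n : ℕ => ‖y n‖) 1).2 hy0
  simpa [y] using tendsto_zero_iff_norm_tendsto_zero.2 hy1

/-- **Corollary 2 (gasc2).** In a real or complex Banach algebra `X` with identity,
with `‖gₙ(ξ)‖ ≤ σ‖ξ‖` (`σ > 0`), let `b` be invertible with `‖b‖ < 1` and let
`a₀, …, a_k` with `a_k ≠ 0` satisfy `a₀b^k + a₁b^{k−1} + ⋯ + a_k = b^{k+1}` and
`∑_{i=0}^{k−1} ‖b^{i+1} − a₀bⁱ − ⋯ − aᵢ‖ < 1 − σ`. Then every solution of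
`x_{n+1} = a₀xₙ + a₁x_{n−1} + ⋯ + a_k x_{n−k} + gₙ(xₙ − b x_{n−1})` converges
to zero. -/
theorem global_attractivity_single_linear_argument
    {𝕜 X : Type*} [RCLike 𝕜] [NormedRing X] [NormOneClass X]
    [NormedAlgebra 𝕜 X] [CompleteSpace X]
    (k : ℕ) (hk : 0 < k)
    (g : ℕ → X → X) (σ : ℝ) (hσ : 0 < σ)
    (hg : ∀ (n : ℕ) (ξ : X), ‖g n ξ‖ ≤ σ * ‖ξ‖)
    (b : X) (hb : IsUnit b) (hb1 : ‖b‖ < 1)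
    (a : ℕ → X) (hak : a k ≠ 0)
    (hroot : ∑ i ∈ Finset.range (k + 1), a i * b ^ (k - i) = b ^ (k + 1))
    (hsum : ∑ i ∈ Finset.range k,
      ‖b ^ (i + 1) - ∑ j ∈ Finset.range (i + 1), a j * b ^ (i - j)‖ < 1 - σ)
    (x : ℤ → X)
    (hx : ∀ n : ℤ, 0 ≤ n → x (n + 1) =
      ∑ i ∈ Finset.range (k + 1), a i * x (n - (i : ℤ)) +
        g n.toNat (x n - b * x (n - 1))) :
    Filter.Tendsto (fun n : ℕ => x (n : ℤ)) Filter.atTop (nhds 0) :=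
  global_attractivity_single_linear_argument_general k g σ hσ hg b hb1 a hroot hsum x hx
end

section
/- Let X be a real or complex Banach algebra with identity and let g_n : X → X (n = 0,1,2,…) satisfy ‖g_n(ξ)‖ ≤ σ‖ξ‖ for all ξ ∈ X and all n, for some real σ > 0. Let a_0, a_1 ∈ X and let b be an invertible element of X such that ‖b‖ < 1, a_0 b + a_1 = b², and ‖a_0 − b‖ + σ < 1. Then every solution (x_n)_{n ≥ −1} of the second-order difference equation x_{n+1} = a_0 x_n + a_1 x_{n−1} + g_n(x_n − b x_{n−1}) with initial values x_0, x_{−1} ∈ X converges to zero. -/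
/-- **Second-order case of Corollary 2.** In a real or complex Banach algebra `X`
with identity, with `‖gₙ(ξ)‖ ≤ σ‖ξ‖` (`σ > 0`), let `a₀, a₁ ∈ X` and let `b` be
invertible with `‖b‖ < 1`, `a₀b + a₁ = b²` and `‖a₀ − b‖ + σ < 1`. Then every
solution of `x_{n+1} = a₀xₙ + a₁x_{n−1} + gₙ(xₙ − b x_{n−1})` converges to zero. -/
theorem global_attractivity_second_order
    {𝕜 X : Type*} [RCLike 𝕜] [NormedRing X] [NormOneClass X]
    [NormedAlgebra 𝕜 X] [CompleteSpace X]
    (g : ℕ → X → X) (σ : ℝ) (hσ : 0 < σ)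
    (hg : ∀ (n : ℕ) (ξ : X), ‖g n ξ‖ ≤ σ * ‖ξ‖)
    (a₀ a₁ b : X) (hb : IsUnit b) (hb1 : ‖b‖ < 1)
    (hroot : a₀ * b + a₁ = b ^ 2)
    (hsum : ‖a₀ - b‖ + σ < 1)
    (x : ℤ → X)
    (hx : ∀ n : ℤ, 0 ≤ n → x (n + 1) =
      a₀ * x n + a₁ * x (n - 1) + g n.toNat (x n - b * x (n - 1))) :
    Filter.Tendsto (fun n : ℕ => x (n : ℤ)) Filter.atTop (nhds 0) := by
  set q : ℝ := ‖a₀ - b‖ + σ with hq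
  have hq0 : 0 < q := by positivity
  set r : ℝ := max ‖b‖ q with hr
  have hr0 : 0 ≤ r := le_trans (norm_nonneg b) (le_max_left _ _)
  have hr1 : r < 1 := max_lt hb1 hsum
  -- the auxiliary sequence y n = x n - b x (n-1)
  set y : ℕ → X := fun n => x (n : ℤ) - b * x ((n : ℤ) - 1) with hy
  have ha₁ : a₁ = b ^ 2 - a₀ * b := by
    rw [← hroot]; abel
  have hyrec : ∀ n : ℕ, y (n + 1) = (a₀ - b) * y n + g n (y n) := by
    intro n
    have h := hx (n : ℤ) (Int.natCast_nonneg n)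
    simp only [Int.toNat_natCast] at h
    simp only [hy]
    push_cast
    rw [add_sub_cancel_right, h, ha₁]
    noncomm_ring
  have hynorm : ∀ n : ℕ, ‖y n‖ ≤ q ^ n * ‖y 0‖ := by
    intro n
    induction n with
    | zero => simp
    | succ n ih =>
      rw [hyrec n]
      calc ‖(a₀ - b) * y n + g n (y n)‖ ≤ ‖(a₀ - b) * y n‖ + ‖g n (y n)‖ := norm_add_le _ _
        _ ≤ ‖a₀ - b‖ * ‖y n‖ + σ * ‖y n‖ :=
            add_le_add (norm_mul_le _ _) (hg n (y n))
        _ = q * ‖y n‖ := by ring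
        _ ≤ q * (q ^ n * ‖y 0‖) := by
            exact mul_le_mul_of_nonneg_left ih hq0.le
        _ = q ^ (n + 1) * ‖y 0‖ := by ring
  have hxy : ∀ n : ℕ, x ((n : ℤ) + 1) = b * x (n : ℤ) + y (n + 1) := by
    intro n
    simp only [hy]
    push_cast
    rw [add_sub_cancel_right]
    abel
  have hxbound : ∀ n : ℕ, ‖x (n : ℤ)‖ ≤ r ^ n * (‖x 0‖ + n * ‖y 0‖) := by
    intro n
    induction n with
    | zero => simp
    | succ n ih =>
      have key : ‖y (n + 1)‖ ≤ r ^ (n + 1) * ‖y 0‖ := by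
        refine (hynorm (n + 1)).trans ?_
        exact mul_le_mul_of_nonneg_right
          (pow_le_pow_left₀ hq0.le (le_max_right _ _) _) (norm_nonneg _)
      have : ((n : ℤ) + 1) = ((n + 1 : ℕ) : ℤ) := by push_cast; ring
      rw [← this, hxy n]
      calc ‖b * x (n : ℤ) + y (n + 1)‖ ≤ ‖b‖ * ‖x (n : ℤ)‖ + ‖y (n + 1)‖ :=
            (norm_add_le _ _).trans (by gcongr; exact norm_mul_le _ _)
        _ ≤ r * (r ^ n * (‖x 0‖ + n * ‖y 0‖)) + r ^ (n + 1) * ‖y 0‖ :=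
            add_le_add (mul_le_mul (le_max_left _ _) ih (norm_nonneg _) hr0) key
        _ = r ^ (n + 1) * (‖x 0‖ + ((n + 1 : ℕ) : ℝ) * ‖y 0‖) := by push_cast; ring
  have hlim : Filter.Tendsto (fun n : ℕ => r ^ n * (‖x 0‖ + n * ‖y 0‖))
      Filter.atTop (nhds 0) := by
    have h1 : Filter.Tendsto (fun n : ℕ => r ^ n * ‖x 0‖ + (n * r ^ n) * ‖y 0‖)
        Filter.atTop (nhds (0 * ‖x 0‖ + 0 * ‖y 0‖)) := by
      exact ((tendsto_pow_atTop_nhds_zero_of_lt_one hr0 hr1).mul_const _).add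
        ((tendsto_self_mul_const_pow_of_lt_one hr0 hr1).mul_const _)
    simpa [mul_comm, mul_add, mul_assoc, mul_left_comm] using h1
  refine squeeze_zero_norm (fun n => ?_) hlim
  exact hxbound n
end

section
/- Let X be a real or complex Banach algebra with identity, let g_n : X → X (n = 0,1,2,…) be a sequence of functions, let a_0, a_1 ∈ X, and let b be an invertible element of X with ‖b‖ < 1 and a_0 b + a_1 = b². Let x_0, x_{−1} ∈ X be initial values for the second-order equation x_{n+1} = a_0 x_n + a_1 x_{n−1} + g_n(x_n − b x_{n−1}), and suppose the solution (t_n)_{n ≥ 0} of the first-order equation t_{n+1} = (a_0 − b) t_n + g_n(t_n) with initial value t_0 = x_0 − b x_{−1} converges to zero. Then the corresponding solution (x_n)_{n ≥ −1} of the second-order equation converges to zero. In particular, if the origin is a global attractor of the solutions of the first-order equation t_{n+1} = (a_0 − b) t_n + g_n(t_n), then it is a global attractor of the solutions of the second-order equation. -/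
private lemma aux_conv {X : Type*} [NormedRing X] (b : X) (hb1 : ‖b‖ < 1)
    (s u : ℕ → X) (hrec : ∀ n, u (n + 1) = b * u n + s (n + 1))
    (hs : Filter.Tendsto s Filter.atTop (nhds 0)) :
    Filter.Tendsto u Filter.atTop (nhds 0) := by
  rw [NormedAddCommGroup.tendsto_nhds_zero] at hs ⊢
  intro ε hε
  set r := ‖b‖ with hr
  have hr0 : 0 ≤ r := norm_nonneg b
  have hr1 : 0 < 1 - r := by linarith
  have hδ : 0 < ε * (1 - r) / 2 := by positivity
  obtain ⟨N, hN⟩ := Filter.eventually_atTop.1 (hs _ hδ)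
  have key : ∀ m, ‖u (N + m)‖ ≤ r ^ m * ‖u N‖ + ε / 2 := by
    intro m
    induction m with
    | zero => simp; linarith
    | succ m ih =>
      have h1 : u (N + (m + 1)) = b * u (N + m) + s (N + m + 1) := by
        have h := hrec (N + m); rwa [show N + (m + 1) = N + m + 1 from rfl]
      have h2 : ‖u (N + (m + 1))‖ ≤ r * ‖u (N + m)‖ + ε * (1 - r) / 2 := by
        rw [h1]
        calc ‖b * u (N + m) + s (N + m + 1)‖
            ≤ ‖b * u (N + m)‖ + ‖s (N + m + 1)‖ := norm_add_le _ _
          _ ≤ r * ‖u (N + m)‖ + ε * (1 - r) / 2 :=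
              add_le_add (norm_mul_le _ _) (le_of_lt (hN _ (by omega)))
      have h4 : r * ‖u (N + m)‖ ≤ r * (r ^ m * ‖u N‖ + ε / 2) :=
        mul_le_mul_of_nonneg_left ih hr0
      have h5 : r * (r ^ m * ‖u N‖ + ε / 2) = r ^ (m + 1) * ‖u N‖ + r * ε / 2 := by
        ring
      have h6 : r * ε / 2 + ε * (1 - r) / 2 = ε / 2 := by ring
      linarith
  have hpow : Filter.Tendsto (fun m : ℕ => r ^ m * ‖u N‖) Filter.atTop (nhds 0) := by
    simpa using (tendsto_pow_atTop_nhds_zero_of_lt_one hr0 hb1).mul_const ‖u N‖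
  have hε2 : (0:ℝ) < ε / 2 := by linarith
  obtain ⟨M, hM⟩ := Filter.eventually_atTop.1
    ((NormedAddCommGroup.tendsto_nhds_zero.1 hpow) _ hε2)
  refine Filter.eventually_atTop.2 ⟨N + M, fun n hn => ?_⟩
  obtain ⟨m, rfl⟩ : ∃ m, n = N + m := ⟨n - N, by omega⟩
  have h1 := key m
  have h2 := hM m (by omega)
  have h3 : r ^ m * ‖u N‖ < ε / 2 := lt_of_abs_lt (by simpa [abs_mul, abs_pow, abs_of_nonneg hr0, abs_norm] using h2)
  linarith

/-- **Theorem 2 (Theorem 21).** In a real or complex Banach algebra `X` with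
identity, let `b` be invertible with `‖b‖ < 1` and `a₀b + a₁ = b²`. If
`x₀, x₋₁` are initial values of `x_{n+1} = a₀xₙ + a₁x_{n−1} + gₙ(xₙ − b x_{n−1})`
for which the solution of the first-order equation
`t_{n+1} = (a₀ − b)tₙ + gₙ(tₙ)` with `t₀ = x₀ − b x₋₁` converges to zero, then
the corresponding solution `(xₙ)` converges to zero.  (In particular, if the
origin is a global attractor of the first-order equation, it is also a global
attractor of the second-order equation.) -/
theorem second_order_attractivity_via_factor_equation
    {𝕜 X : Type*} [RCLike 𝕜] [NormedRing X] [NormOneClass X]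
    [NormedAlgebra 𝕜 X] [CompleteSpace X]
    (g : ℕ → X → X)
    (a₀ a₁ b : X) (hb : IsUnit b) (hb1 : ‖b‖ < 1)
    (hroot : a₀ * b + a₁ = b ^ 2)
    (x : ℤ → X)
    (hx : ∀ n : ℤ, 0 ≤ n → x (n + 1) =
      a₀ * x n + a₁ * x (n - 1) + g n.toNat (x n - b * x (n - 1)))
    (t : ℕ → X)
    (ht0 : t 0 = x 0 - b * x (-1))
    (ht : ∀ n : ℕ, t (n + 1) = (a₀ - b) * t n + g n (t n))
    (htconv : Filter.Tendsto t Filter.atTop (nhds 0)) :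
    Filter.Tendsto (fun n : ℕ => x (n : ℤ)) Filter.atTop (nhds 0) := by
  have ha1 : a₁ = b ^ 2 - a₀ * b := eq_sub_of_add_eq' hroot
  have tclaim : ∀ n : ℕ, t n = x (n : ℤ) - b * x ((n : ℤ) - 1) := by
    intro n
    induction n with
    | zero => simpa using ht0
    | succ n ih =>
      have hxn := hx (n : ℤ) (by positivity)
      rw [Int.toNat_natCast] at hxn
      have hcast : ((n + 1 : ℕ) : ℤ) = (n : ℤ) + 1 := by push_cast; ring
      rw [hcast]
      have : ((n : ℤ) + 1 - 1) = (n : ℤ) := by ring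
      rw [this, hxn, ht n, ih, ha1]
      noncomm_ring
  apply aux_conv b hb1 t (fun n : ℕ => x (n : ℤ))
  · intro n
    have h := tclaim (n + 1)
    have hcast : ((n + 1 : ℕ) : ℤ) = (n : ℤ) + 1 := by push_cast; ring
    rw [hcast] at h
    have : ((n : ℤ) + 1 - 1) = (n : ℤ) := by ring
    rw [this] at h
    show x ((n : ℤ) + 1) = b * x (n : ℤ) + t (n + 1)
    rw [h]; abel
  · exact htconv
end

section
/- Let C[0,1] denote the real Banach algebra of continuous real-valued functions on [0,1] with the supremum norm. Let α, β, σ be real numbers with 0 < β < 1, 3β ≤ α < 2 + β, and 0 < σ < (2 + β − α)/2. Let φ_n : ℝ → ℝ (n = 0,1,2,…) be measurable functions satisfying |φ_n(t)| ≤ σ|t| for all t ∈ ℝ. Then for every pair of initial functions x_0, x_{−1} ∈ C[0,1], the solution (x_n)_{n ≥ −1} in C[0,1] of the difference equation x_{n+1}(r) = (αr/(r+1))·x_n(r) + (β(β − αr)/(r+1)²)·x_{n−1}(r) + ∫_0^r φ_n( x_n(s) − (β/(s+1))·x_{n−1}(s) ) ds (for r ∈ [0,1]) converges uniformly on [0,1]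 to the zero function. -/
set_option maxHeartbeats 1000000


/-- **Example (equation (glac)) in the Banach algebra `C[0,1]`.** Let
`0 < β < 1`, `3β ≤ α < 2 + β`, `0 < σ < (2 + β − α)/2`, and let `φₙ : ℝ → ℝ` be
measurable with `|φₙ(t)| ≤ σ|t|`. Then every solution in `C[0,1]` of
`x_{n+1}(r) = (αr/(r+1)) xₙ(r) + (β(β − αr)/(r+1)²) x_{n−1}(r)
  + ∫₀^r φₙ(xₙ(s) − (β/(s+1)) x_{n−1}(s)) ds`
converges uniformly on `[0,1]` (i.e. in the sup norm) to the zero function. -/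
theorem uniform_convergence_integral_difference_equation
    (α β σ : ℝ) (hβ0 : 0 < β) (hβ1 : β < 1)
    (hα1 : 3 * β ≤ α) (hα2 : α < 2 + β)
    (hσ0 : 0 < σ) (hσ : σ < (2 + β - α) / 2)
    (φ : ℕ → ℝ → ℝ) (hφmeas : ∀ n : ℕ, Measurable (φ n))
    (hφ : ∀ (n : ℕ) (u : ℝ), |φ n u| ≤ σ * |u|)
    (x : ℤ → C(Set.Icc (0 : ℝ) 1, ℝ))
    (hx : ∀ n : ℤ, 0 ≤ n → ∀ r : Set.Icc (0 : ℝ) 1,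
      x (n + 1) r =
        (α * (r : ℝ) / ((r : ℝ) + 1)) * x n r +
        (β * (β - α * (r : ℝ)) / ((r : ℝ) + 1) ^ 2) * x (n - 1) r +
        ∫ s in (0 : ℝ)..(r : ℝ), φ n.toNat
          (x n (Set.projIcc (0 : ℝ) 1 zero_le_one s) -
            (β / (s + 1)) * x (n - 1) (Set.projIcc (0 : ℝ) 1 zero_le_one s))) :
    Filter.Tendsto (fun n : ℕ => ‖x (n : ℤ)‖) Filter.atTop (nhds 0) := by
  set q : ℝ := (α - β) / 2 + σ with hqdef
  have hαβ : 0 ≤ (α - β) / 2 := by nlinarith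
  have hq0 : 0 ≤ q := by positivity
  have hq1 : q < 1 := by rw [hqdef]; nlinarith
  -- the auxiliary continuous function g(r) = β/(r+1)
  have hgcont : Continuous fun r : Set.Icc (0 : ℝ) 1 => β / ((r : ℝ) + 1) := by
    apply Continuous.div continuous_const (by continuity)
    intro r
    have := r.2.1
    nlinarith
  set g : C(Set.Icc (0 : ℝ) 1, ℝ) := ⟨fun r => β / ((r : ℝ) + 1), hgcont⟩ with hgdef
  set y : ℕ → C(Set.Icc (0 : ℝ) 1, ℝ) := fun k => x (k : ℤ) - g * x ((k : ℤ) - 1)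
    with hydef
  have hyapp : ∀ (k : ℕ) (r : Set.Icc (0 : ℝ) 1),
      y k r = x (k : ℤ) r - (β / ((r : ℝ) + 1)) * x ((k : ℤ) - 1) r := by
    intro k r
    simp [hydef, hgdef]
  -- pointwise key estimate
  have key : ∀ (n : ℕ) (r : Set.Icc (0 : ℝ) 1), |y (n + 1) r| ≤ q * ‖y n‖ := by
    intro n r
    have hr0 : (0 : ℝ) ≤ (r : ℝ) := r.2.1
    have hr1 : (r : ℝ) ≤ 1 := r.2.2
    have hrpos : (0 : ℝ) < (r : ℝ) + 1 := by linarith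
    have hcast1 : ((n + 1 : ℕ) : ℤ) = (n : ℤ) + 1 := by push_cast; ring
    have hcast2 : (n : ℤ) + 1 - 1 = (n : ℤ) := add_sub_cancel_right _ _
    -- the integral term
    set I : ℝ := ∫ s in (0 : ℝ)..(r : ℝ), φ n
          (x (n : ℤ) (Set.projIcc (0 : ℝ) 1 zero_le_one s) -
            (β / (s + 1)) * x ((n : ℤ) - 1) (Set.projIcc (0 : ℝ) 1 zero_le_one s))
      with hIdef
    have hrec : y (n + 1) r = ((α * (r : ℝ) - β) / ((r : ℝ) + 1)) * y n r + I := by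
      have h := hx (n : ℤ) (by positivity) r
      rw [Int.toNat_natCast] at h
      rw [hyapp, hyapp, hcast1, hcast2, h, hIdef]
      field_simp
      ring
    -- bound on the coefficient
    have hcoef : |(α * (r : ℝ) - β) / ((r : ℝ) + 1)| ≤ (α - β) / 2 := by
      rw [abs_div, abs_of_pos hrpos, div_le_iff₀ hrpos]
      rcases abs_cases (α * (r : ℝ) - β) with ⟨he, _⟩ | ⟨he, _⟩ <;> rw [he] <;> nlinarith
    -- bound on the integral
    have hInt : |I| ≤ σ * ‖y n‖ * (r : ℝ) := by
      have hb : ∀ s ∈ Set.uIoc (0 : ℝ) (r : ℝ),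
          ‖φ n (x (n : ℤ) (Set.projIcc (0 : ℝ) 1 zero_le_one s) -
            (β / (s + 1)) * x ((n : ℤ) - 1) (Set.projIcc (0 : ℝ) 1 zero_le_one s))‖
            ≤ σ * ‖y n‖ := by
        intro s hs
        rw [Set.uIoc_of_le hr0] at hs
        have hs0 : (0 : ℝ) ≤ s := le_of_lt hs.1
        have hs1 : s ≤ 1 := le_trans hs.2 hr1
        have hmem : s ∈ Set.Icc (0 : ℝ) 1 := ⟨hs0, hs1⟩
        have hproj : Set.projIcc (0 : ℝ) 1 zero_le_one s = ⟨s, hmem⟩ :=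
          Set.projIcc_of_mem zero_le_one hmem
        rw [hproj, Real.norm_eq_abs]
        have h1 := hφ n (x (n : ℤ) ⟨s, hmem⟩ - (β / (s + 1)) * x ((n : ℤ) - 1) ⟨s, hmem⟩)
        have h2 : x (n : ℤ) ⟨s, hmem⟩ - (β / (s + 1)) * x ((n : ℤ) - 1) ⟨s, hmem⟩
            = y n ⟨s, hmem⟩ := by rw [hyapp]
        rw [h2] at h1
        refine h1.trans ?_
        have := (y n).norm_coe_le_norm ⟨s, hmem⟩
        rw [Real.norm_eq_abs] at this
        nlinarith [norm_nonneg (y n), abs_nonneg (y n ⟨s, hmem⟩)]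
      have := intervalIntegral.norm_integral_le_of_norm_le_const hb
      rw [Real.norm_eq_abs, sub_zero, abs_of_nonneg hr0] at this
      exact this
    rw [hrec]
    have h1 : |((α * (r : ℝ) - β) / ((r : ℝ) + 1)) * y n r + I|
        ≤ |(α * (r : ℝ) - β) / ((r : ℝ) + 1)| * |y n r| + |I| := by
      refine (abs_add_le _ _).trans ?_
      rw [abs_mul]
    refine h1.trans ?_
    have h2 : |y n r| ≤ ‖y n‖ := by
      have := (y n).norm_coe_le_norm r
      rwa [Real.norm_eq_abs] at this
    have hyn : (0 : ℝ) ≤ ‖y n‖ := norm_nonneg _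
    have hA : |(α * (r : ℝ) - β) / ((r : ℝ) + 1)| * |y n r| ≤ (α - β) / 2 * ‖y n‖ :=
      mul_le_mul hcoef h2 (abs_nonneg _) hαβ
    have hB : σ * ‖y n‖ * (r : ℝ) ≤ σ * ‖y n‖ := by
      nlinarith [mul_nonneg (mul_nonneg hσ0.le hyn) (by linarith : (0:ℝ) ≤ 1 - (r:ℝ))]
    refine le_trans (add_le_add hA (hInt.trans hB)) (le_of_eq ?_)
    rw [hqdef]; ring
  -- norm recurrence for y
  have hYrec : ∀ n : ℕ, ‖y (n + 1)‖ ≤ q * ‖y n‖ := by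
    intro n
    refine (ContinuousMap.norm_le _ (by positivity)).2 fun r => ?_
    rw [Real.norm_eq_abs]
    exact key n r
  have hY : ∀ n : ℕ, ‖y n‖ ≤ ‖y 0‖ * q ^ n := by
    intro n
    induction n with
    | zero => simp
    | succ n ih =>
        calc ‖y (n + 1)‖ ≤ q * ‖y n‖ := hYrec n
          _ ≤ q * (‖y 0‖ * q ^ n) := by nlinarith [norm_nonneg (y n)]
          _ = ‖y 0‖ * q ^ (n + 1) := by ring
  -- norm recurrence for x
  have hXrec : ∀ n : ℕ, ‖x ((n : ℤ) + 1)‖ ≤ ‖y (n + 1)‖ + β * ‖x (n : ℤ)‖ := by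
    intro n
    refine (ContinuousMap.norm_le _ (by positivity)).2 fun r => ?_
    have hr0 : (0 : ℝ) ≤ (r : ℝ) := r.2.1
    have hrpos : (0 : ℝ) < (r : ℝ) + 1 := by linarith
    have hcast1 : ((n + 1 : ℕ) : ℤ) = (n : ℤ) + 1 := by push_cast; ring
    have hcast2 : (n : ℤ) + 1 - 1 = (n : ℤ) := add_sub_cancel_right _ _
    have hdecomp : x ((n : ℤ) + 1) r = y (n + 1) r + (β / ((r : ℝ) + 1)) * x (n : ℤ) r := by
      rw [hyapp, hcast1, hcast2]; ring
    rw [Real.norm_eq_abs, hdecomp]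
    have h1 : |y (n + 1) r + (β / ((r : ℝ) + 1)) * x (n : ℤ) r|
        ≤ |y (n + 1) r| + (β / ((r : ℝ) + 1)) * |x (n : ℤ) r| := by
      refine (abs_add_le _ _).trans ?_
      rw [abs_mul, abs_of_pos (by positivity : (0:ℝ) < β / ((r : ℝ) + 1))]
    refine h1.trans ?_
    have h2 : |y (n + 1) r| ≤ ‖y (n + 1)‖ := by
      have := (y (n + 1)).norm_coe_le_norm r
      rwa [Real.norm_eq_abs] at this
    have h3 : |x (n : ℤ) r| ≤ ‖x (n : ℤ)‖ := by
      have := (x (n : ℤ)).norm_coe_le_norm r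
      rwa [Real.norm_eq_abs] at this
    have h4 : β / ((r : ℝ) + 1) ≤ β := by
      rw [div_le_iff₀ hrpos]; nlinarith
    have h5 : (0:ℝ) < β / ((r : ℝ) + 1) := by positivity
    nlinarith [abs_nonneg (x (n : ℤ) r), norm_nonneg (x (n : ℤ))]
  -- combine
  set m : ℝ := max q β with hmdef
  have hm0 : 0 ≤ m := le_trans hq0 (le_max_left _ _)
  have hm1 : m < 1 := max_lt hq1 hβ1
  have hqm : q ≤ m := le_max_left _ _
  have hβm : β ≤ m := le_max_right _ _
  have hbound : ∀ n : ℕ, ‖x (n : ℤ)‖ ≤ (‖x 0‖ + n * ‖y 0‖) * m ^ n := by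
    intro n
    induction n with
    | zero => simp
    | succ n ih =>
        have h1 : ‖x ((n + 1 : ℕ) : ℤ)‖ ≤ ‖y (n + 1)‖ + β * ‖x (n : ℤ)‖ := by
          have := hXrec n
          rwa [show ((n + 1 : ℕ) : ℤ) = (n : ℤ) + 1 by push_cast; ring]
        have h2 : ‖y (n + 1)‖ ≤ ‖y 0‖ * q ^ (n + 1) := hY (n + 1)
        have h3 : q ^ (n + 1) ≤ m ^ (n + 1) := pow_le_pow_left₀ hq0 hqm _
        have h4 : (0:ℝ) ≤ (‖x 0‖ + n * ‖y 0‖) * m ^ n := by positivity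
        have h5 : β * ‖x (n : ℤ)‖ ≤ m * ((‖x 0‖ + n * ‖y 0‖) * m ^ n) := by
          nlinarith [norm_nonneg (x (n : ℤ))]
        calc ‖x ((n + 1 : ℕ) : ℤ)‖ ≤ ‖y 0‖ * q ^ (n + 1) + β * ‖x (n : ℤ)‖ := by linarith
          _ ≤ ‖y 0‖ * m ^ (n + 1) + m * ((‖x 0‖ + n * ‖y 0‖) * m ^ n) := by
              nlinarith [norm_nonneg (y 0)]
          _ = (‖x 0‖ + (n + 1 : ℕ) * ‖y 0‖) * m ^ (n + 1) := by push_cast; ring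
  have hlim : Filter.Tendsto (fun n : ℕ => (‖x 0‖ + n * ‖y 0‖) * m ^ n)
      Filter.atTop (nhds 0) := by
    have h1 := (tendsto_pow_atTop_nhds_zero_of_lt_one hm0 hm1).const_mul ‖x 0‖
    have h2 := (tendsto_pow_const_mul_const_pow_of_abs_lt_one 1
      (by rwa [abs_of_nonneg hm0])).const_mul ‖y 0‖
    have h3 := h1.add h2
    simp only [mul_zero, add_zero] at h3
    refine h3.congr fun n => ?_
    simp only [pow_one]
    ring
  exact squeeze_zero (fun n => norm_nonneg _) hbound hlim
end

section
/- Let a, b, σ be real numbers with b − 1 ≤ a < b and 0 < σ < 1 − a + b, and define h : ℝ → ℝ by h(ξ) = (a − b)ξ + σ·tanh ξ. Then |h(ξ)| < |ξ| for all ξ ≠ 0; in particular, the origin is the unique fixed point of h. -/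
/-! Writing `h ξ = (a - b + σ · tanh ξ / ξ) · ξ`, it suffices that the slope lies in `(-1, 1)`.
Since `tanh' = 1 / cosh² ≤ 1`, the mean value theorem gives `|tanh ξ| ≤ |ξ|`, and `tanh ξ` has the
sign of `ξ`; hence `tanh ξ / ξ ∈ (0, 1]` and the slope lies in `(a - b, a - b + σ] ⊆ (-1, 1)`. -/

open Real

theorem Real.hasDerivAt_tanh (x : ℝ) : HasDerivAt tanh (1 / cosh x ^ 2) x := by
  have hquot := (hasDerivAt_sinh x).div (hasDerivAt_cosh x) (cosh_pos x).ne'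
  rw [show tanh = sinh / cosh from funext tanh_eq_sinh_div_cosh]
  exact hquot.congr_deriv (by rw [← cosh_sq_sub_sinh_sq x, sq, sq])

theorem Real.abs_tanh_le_abs (x : ℝ) : |tanh x| ≤ |x| := by
  have hbound : ∀ y ∈ Set.univ, ‖1 / cosh y ^ 2‖ ≤ 1 := fun y _ => by
    rw [norm_div, norm_one, norm_pow, Real.norm_eq_abs, abs_of_pos (cosh_pos y)]
    exact div_le_one_of_le₀ (one_le_pow₀ (one_le_cosh y)) (by positivity)
  simpa using Convex.norm_image_sub_le_of_norm_hasDerivWithin_le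
    (fun y _ => (hasDerivAt_tanh y).hasDerivWithinAt) hbound convex_univ
    (Set.mem_univ 0) (Set.mem_univ x)

theorem Real.tanh_div_self_mem_Ioc {x : ℝ} (hx : x ≠ 0) : tanh x / x ∈ Set.Ioc 0 1 := by
  refine ⟨?_, ?_⟩
  · rw [tanh_eq_sinh_div_cosh, div_div, mul_comm, ← div_div]
    refine div_pos ?_ (cosh_pos x)
    rcases hx.lt_or_gt with hneg | hpos
    · exact div_pos_of_neg_of_neg (sinh_neg_iff.2 hneg) hneg
    · exact div_pos (sinh_pos_iff.2 hpos) hpos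
  · calc tanh x / x ≤ |tanh x / x| := le_abs_self _
      _ = |tanh x| / |x| := abs_div _ _
      _ ≤ 1 := div_le_one_of_le₀ (abs_tanh_le_abs x) (abs_nonneg x)

theorem tanh_map_norm_decreasing_general
    (a b σ : ℝ) (hba : b - 1 ≤ a) (hσ0 : 0 < σ) (hσ : σ < 1 - a + b) :
    (∀ ξ : ℝ, ξ ≠ 0 → |(a - b) * ξ + σ * Real.tanh ξ| < |ξ|) ∧
    (∀ ξ : ℝ, (a - b) * ξ + σ * Real.tanh ξ = ξ → ξ = 0) := by
  have contracts : ∀ ξ : ℝ, ξ ≠ 0 → |(a - b) * ξ + σ * tanh ξ| < |ξ| := by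
    intro ξ hξ
    obtain ⟨hpos, hle⟩ := tanh_div_self_mem_Ioc hξ
    have hslope : |(a - b) + σ * (tanh ξ / ξ)| < 1 :=
      abs_lt.2 ⟨by nlinarith, by nlinarith⟩
    calc |(a - b) * ξ + σ * tanh ξ| = |(a - b) + σ * (tanh ξ / ξ)| * |ξ| := by
          rw [← abs_mul, add_mul, mul_assoc, div_mul_cancel₀ _ hξ]
      _ < |ξ| := mul_lt_of_lt_one_left (abs_pos.2 hξ) hslope
  exact ⟨contracts, fun ξ hfix => by_contra fun hξ => (contracts ξ hξ).ne (by rw [hfix])⟩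

/-- **Example (equation (th1)).** For real `a, b, σ` with `b − 1 ≤ a < b` and
`0 < σ < 1 − a + b`, the map `h(ξ) = (a − b)ξ + σ tanh ξ` satisfies
`|h(ξ)| < |ξ|` for all `ξ ≠ 0`; in particular the origin is the unique fixed
point of `h`. -/
theorem tanh_map_norm_decreasing
    (a b σ : ℝ) (hba : b - 1 ≤ a) (hab : a < b) (hσ0 : 0 < σ) (hσ : σ < 1 - a + b) :
    (∀ ξ : ℝ, ξ ≠ 0 → |(a - b) * ξ + σ * Real.tanh ξ| < |ξ|) ∧
    (∀ ξ : ℝ, (a - b) * ξ + σ * Real.tanh ξ = ξ → ξ = 0) :=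
  tanh_map_norm_decreasing_general a b σ hba hσ0 hσ
end

section
/- Let a, b, σ be real numbers with 0 < b < 1, b − 1 ≤ a < b, and 0 < σ < 1 − a + b. Then every solution (x_n)_{n ≥ −1} of the second-order difference equation x_{n+1} = a x_n + b(b − a) x_{n−1} + σ·tanh(x_n − b x_{n−1}) over the real numbers converges to zero. -/
open Filter Real

/-- `sinh x ≤ x * cosh x` for `x ≥ 0`. -/
private lemma sinh_le_mul_cosh {x : ℝ} (hx : 0 ≤ x) : Real.sinh x ≤ x * Real.cosh x := by
  have h : MonotoneOn (fun t : ℝ => t * Real.cosh t - Real.sinh t) (Set.Ici 0) := by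
    apply monotoneOn_of_deriv_nonneg (convex_Ici 0)
    · exact ((continuous_id.mul Real.continuous_cosh).sub Real.continuous_sinh).continuousOn
    · intro t ht
      exact (((hasDerivAt_id t).mul (Real.hasDerivAt_cosh t)).sub
        (Real.hasDerivAt_sinh t)).differentiableAt.differentiableWithinAt
    · intro t ht
      rw [interior_Ici, Set.mem_Ioi] at ht
      have hd : HasDerivAt (fun t : ℝ => t * Real.cosh t - Real.sinh t)
          (1 * Real.cosh t + t * Real.sinh t - Real.cosh t) t :=
        ((hasDerivAt_id t).mul (Real.hasDerivAt_cosh t)).sub (Real.hasDerivAt_sinh t)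
      rw [hd.deriv]
      have : 0 ≤ Real.sinh t := Real.sinh_nonneg_iff.2 ht.le
      nlinarith
  have := h (Set.self_mem_Ici) (Set.mem_Ici.2 hx) hx
  simp at this
  linarith

private lemma tanh_nonneg' {x : ℝ} (hx : 0 ≤ x) : 0 ≤ Real.tanh x := by
  rw [Real.tanh_eq_sinh_div_cosh]
  exact div_nonneg (Real.sinh_nonneg_iff.2 hx) (Real.cosh_pos x).le

private lemma tanh_pos' {x : ℝ} (hx : 0 < x) : 0 < Real.tanh x := by
  rw [Real.tanh_eq_sinh_div_cosh]
  exact div_pos (Real.sinh_pos_iff.2 hx) (Real.cosh_pos x)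

private lemma tanh_le_self' {x : ℝ} (hx : 0 ≤ x) : Real.tanh x ≤ x := by
  rw [Real.tanh_eq_sinh_div_cosh, div_le_iff₀ (Real.cosh_pos x)]
  exact sinh_le_mul_cosh hx

private lemma tanh_mono' {x y : ℝ} (hxy : x ≤ y) : Real.tanh x ≤ Real.tanh y := by
  rw [Real.tanh_eq_sinh_div_cosh, Real.tanh_eq_sinh_div_cosh,
    div_le_div_iff₀ (Real.cosh_pos x) (Real.cosh_pos y)]
  have h := Real.sinh_nonneg_iff.2 (sub_nonneg.2 hxy)
  rw [Real.sinh_sub] at h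
  nlinarith

/-- Key step: the first-order map contracts. -/
private lemma y_tendsto (a b σ : ℝ) (hb0 : 0 < b) (hb1 : b < 1) (hba : b - 1 ≤ a) (hab : a < b)
    (hσ0 : 0 < σ) (hσ : σ < 1 - a + b) (y : ℕ → ℝ)
    (hy : ∀ n : ℕ, y (n + 1) = (a - b) * y n + σ * Real.tanh (y n)) :
    Tendsto y atTop (nhds 0) := by
  set q : ℝ := a - b + σ with hq
  have hq1 : q < 1 := by simp [hq]; linarith
  have hmain : ∀ z : ℝ, |(a - b) * z + σ * Real.tanh z| ≤ |z| := by
    intro z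
    rcases le_total 0 z with hz | hz
    · rw [abs_of_nonneg hz, abs_le]
      have h1 := tanh_le_self' hz
      have h2 := tanh_nonneg' hz
      constructor <;> nlinarith
    · have hz' : 0 ≤ -z := by linarith
      rw [abs_of_nonpos hz, abs_le]
      have h1 := tanh_le_self' hz'
      have h2 := tanh_nonneg' hz'
      have h3 : Real.tanh z = -Real.tanh (-z) := by rw [Real.tanh_neg]; ring
      rw [h3]
      constructor <;> nlinarith
  have hanti : Antitone (fun n => |y n|) := by
    apply antitone_nat_of_succ_le
    intro n
    rw [hy n]
    exact hmain (y n)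
  have hbdd : BddBelow (Set.range fun n => |y n|) :=
    ⟨0, fun r ⟨n, hn⟩ => hn ▸ abs_nonneg _⟩
  set L : ℝ := ⨅ n, |y n| with hL
  have hL0 : 0 ≤ L := le_ciInf fun n => abs_nonneg _
  have hLle : ∀ n, L ≤ |y n| := fun n => ciInf_le hbdd n
  have hLzero : L = 0 := by
    by_contra hne
    have hLpos : 0 < L := lt_of_le_of_ne hL0 (Ne.symm hne)
    set δ : ℝ := min ((1 - q) * L) (σ * Real.tanh L) with hδ
    have hδpos : 0 < δ := lt_min (by nlinarith) (mul_pos hσ0 (tanh_pos' hLpos))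
    have hstep : ∀ z : ℝ, L ≤ |z| → |(a - b) * z + σ * Real.tanh z| ≤ |z| - δ := by
      intro z hz
      have key : ∀ w : ℝ, L ≤ w → |(a - b) * w + σ * Real.tanh w| ≤ w - δ := by
        intro w hw
        have hw0 : 0 < w := lt_of_lt_of_le hLpos hw
        have h1 := tanh_le_self' hw0.le
        have h2 : Real.tanh L ≤ Real.tanh w := tanh_mono' hw
        have hd1 : δ ≤ (1 - q) * L := min_le_left _ _
        have hd2 : δ ≤ σ * Real.tanh L := min_le_right _ _
        rw [abs_le]
        constructor
        · -- lower: (a-b)w + σ tanh w ≥ -w + σ tanh L ≥ -(w - δ)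
          nlinarith
        · -- upper: ≤ q w = w - (1-q) w ≤ w - (1-q) L ≤ w - δ
          nlinarith
      rcases le_total 0 z with hz0 | hz0
      · rw [abs_of_nonneg hz0] at hz ⊢
        exact key z hz
      · rw [abs_of_nonpos hz0] at hz ⊢
        have h3 : Real.tanh z = -Real.tanh (-z) := by rw [Real.tanh_neg]; ring
        have := key (-z) hz
        calc |(a - b) * z + σ * Real.tanh z|
            = |(a - b) * (-z) + σ * Real.tanh (-z)| := by
              rw [Real.tanh_neg, ← abs_neg]; ring_nf
          _ ≤ -z - δ := this
    have hdesc : ∀ n : ℕ, |y n| ≤ |y 0| - n * δ := by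
      intro n
      induction n with
      | zero => simp
      | succ k ih =>
        have : |y (k + 1)| ≤ |y k| - δ := by rw [hy k]; exact hstep (y k) (hLle k)
        push_cast
        push_cast at ih
        linarith
    obtain ⟨n, hn⟩ := exists_nat_gt (|y 0| / δ)
    have h1 : |y 0| / δ * δ < n * δ := by exact mul_lt_mul_of_pos_right hn hδpos
    rw [div_mul_cancel₀ _ hδpos.ne'] at h1
    have := hdesc n
    have := abs_nonneg (y n)
    linarith
  have habs : Tendsto (fun n => |y n|) atTop (nhds 0) := by
    have := tendsto_atTop_ciInf hanti hbdd
    rwa [← hL, hLzero] at this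
  have h1 : Tendsto (fun n => -|y n|) atTop (nhds 0) := by
    simpa using habs.neg
  exact tendsto_of_tendsto_of_tendsto_of_le_of_le h1 habs
    (fun n => neg_abs_le _) (fun n => le_abs_self _)

/-- Perturbed linear recursion: if `|u (n+1)| ≤ b |u n| + v n` with `0 ≤ b < 1` and `v → 0`,
then `u → 0`. -/
private lemma perturbed_linear (b : ℝ) (hb0 : 0 ≤ b) (hb1 : b < 1) (u v : ℕ → ℝ)
    (hv : Tendsto v atTop (nhds 0)) (hvn : ∀ n, 0 ≤ v n)
    (hrec : ∀ n, |u (n + 1)| ≤ b * |u n| + v n) :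
    Tendsto u atTop (nhds 0) := by
  rw [Metric.tendsto_atTop]
  intro ε hε
  have hε2 : 0 < ε * (1 - b) / 2 := div_pos (mul_pos hε (by linarith)) two_pos
  obtain ⟨N, hN⟩ := (Metric.tendsto_atTop.1 hv) (ε * (1 - b) / 2) hε2
  have hNv : ∀ n ≥ N, v n ≤ ε * (1 - b) / 2 := by
    intro n hn
    have := hN n hn
    rw [Real.dist_eq, sub_zero, abs_of_nonneg (hvn n)] at this
    linarith
  have hclaim : ∀ k : ℕ, |u (N + k)| ≤ b ^ k * |u N| + ε / 2 := by
    intro k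
    induction k with
    | zero => simp; linarith
    | succ m ih =>
      have h1 := hrec (N + m)
      have h2 := hNv (N + m) (Nat.le_add_right N m)
      have h3 : b * |u (N + m)| ≤ b * (b ^ m * |u N| + ε / 2) :=
        mul_le_mul_of_nonneg_left ih hb0
      have : N + (m + 1) = (N + m) + 1 := by ring
      rw [this]
      calc |u ((N + m) + 1)| ≤ b * |u (N + m)| + v (N + m) := h1
        _ ≤ b * (b ^ m * |u N| + ε / 2) + ε * (1 - b) / 2 := by linarith
        _ = b ^ (m + 1) * |u N| + ε / 2 * b + ε * (1 - b) / 2 := by ring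
        _ ≤ b ^ (m + 1) * |u N| + ε / 2 := by nlinarith
  obtain ⟨K, hK⟩ := (Metric.tendsto_atTop.1
    (tendsto_pow_atTop_nhds_zero_of_lt_one hb0 hb1)) (ε / 2 / (|u N| + 1))
    (div_pos (by linarith) (by positivity))
  refine ⟨N + K, fun n hn => ?_⟩
  obtain ⟨k, rfl⟩ : ∃ k, n = N + k := ⟨n - N, by omega⟩
  have hKk : K ≤ k := by omega
  have hbk : b ^ k ≤ b ^ K := pow_le_pow_of_le_one hb0 hb1.le hKk
  have hbK : b ^ K < ε / 2 / (|u N| + 1) := by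
    have := hK K le_rfl
    rwa [Real.dist_eq, sub_zero, abs_of_nonneg (pow_nonneg hb0 K)] at this
  have hNpos : 0 < |u N| + 1 := by positivity
  have h1 : b ^ k * |u N| ≤ b ^ K * (|u N| + 1) := by
    have h0 := abs_nonneg (u N)
    nlinarith [pow_nonneg hb0 k]
  have h2 : b ^ K * (|u N| + 1) < ε / 2 := (lt_div_iff₀ hNpos).1 hbK
  have := hclaim k
  rw [Real.dist_eq, sub_zero]
  calc |u (N + k)| ≤ b ^ k * |u N| + ε / 2 := this
    _ < ε := by linarith

/-- **Example (equation (th)), case 1 of the bifurcation scenario.** For real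
`a, b, σ` with `0 < b < 1`, `b − 1 ≤ a < b` and `0 < σ < 1 − a + b`, every
solution of `x_{n+1} = a xₙ + b(b − a) x_{n−1} + σ tanh(xₙ − b x_{n−1})`
converges to zero. -/
theorem global_attractivity_tanh_second_order
    (a b σ : ℝ) (hb0 : 0 < b) (hb1 : b < 1) (hba : b - 1 ≤ a) (hab : a < b)
    (hσ0 : 0 < σ) (hσ : σ < 1 - a + b)
    (x : ℤ → ℝ)
    (hx : ∀ n : ℤ, 0 ≤ n → x (n + 1) =
      a * x n + b * (b - a) * x (n - 1) + σ * Real.tanh (x n - b * x (n - 1))) :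
    Filter.Tendsto (fun n : ℕ => x (n : ℤ)) Filter.atTop (nhds 0) := by
  set y : ℕ → ℝ := fun n => x (n : ℤ) - b * x ((n : ℤ) - 1) with hydef
  have hyrec : ∀ n : ℕ, y (n + 1) = (a - b) * y n + σ * Real.tanh (y n) := by
    intro n
    have h := hx (n : ℤ) (Int.natCast_nonneg n)
    simp only [hydef]
    push_cast
    rw [add_sub_cancel_right]
    rw [h]
    ring
  have hy0 : Tendsto y atTop (nhds 0) :=
    y_tendsto a b σ hb0 hb1 hba hab hσ0 hσ y hyrec
  have hv : Tendsto (fun n : ℕ => |y (n + 1)|) atTop (nhds 0) := by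
    have h1 : Tendsto (fun n : ℕ => y (n + 1)) atTop (nhds 0) :=
      hy0.comp (tendsto_add_atTop_nat 1)
    simpa using h1.abs
  refine perturbed_linear b hb0.le hb1 (fun n : ℕ => x (n : ℤ))
    (fun n : ℕ => |y (n + 1)|) hv (fun n => abs_nonneg _) ?_
  intro n
  show |x (((n + 1 : ℕ) : ℤ))| ≤ b * |x (n : ℤ)| + |y (n + 1)|
  have hxy : x ((n : ℤ) + 1) = b * x (n : ℤ) + y (n + 1) := by
    simp only [hydef]
    push_cast
    rw [add_sub_cancel_right]
    ring
  have : ((n + 1 : ℕ) : ℤ) = (n : ℤ) + 1 := by push_cast; ring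
  rw [this, hxy]
  calc |b * x (n : ℤ) + y (n + 1)| ≤ |b * x (n : ℤ)| + |y (n + 1)| := abs_add_le _ _
    _ = b * |x (n : ℤ)| + |y (n + 1)| := by rw [abs_mul, abs_of_pos hb0]
end
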